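/- arXiv:1406.5391 — 10 statements merged into one kernel-verified Lean document; each statement's English description precedes it below -/
import Mathlib

section
/- For a locally finite weighted graph with edge weight E and vertex measure m, for every positive function W on the vertices and every finitely supported function f, the Dirichlet form satisfies (1/2)∑_{x,y} E(x,y)|f(x)-f(y)|² ≥ ∑_x (ΔW(x)/W(x))|f(x)|² m(x), where ΔW(x) = (1/m(x))∑_y E(x,y)(W(x)-W(y)). -/
private lemma hardy_key (a b α β : ℝ) (hα : 0 < α) (hβ : 0 < β) :
    (α - β) * (a ^ 2 / α - b ^ 2 / β) ≤ (a - b) ^ 2 := by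
  have e1 : a ^ 2 / α - b ^ 2 / β = (a ^ 2 * β - b ^ 2 * α) / (α * β) := by
    field_simp
  rw [e1, ← mul_div_assoc, div_le_iff₀ (mul_pos hα hβ)]
  nlinarith [sq_nonneg (β * a - α * b)]

/-- **Hardy inequality** for locally finite weighted graphs: for every positive
function `W` and every finitely supported `f`,
`(1/2)∑_{x,y} E x y (f x - f y)² ≥ ∑_x (ΔW x / W x) (f x)² m x`,
where `ΔW x = (1/m x) ∑_y E x y (W x - W y)`. -/
theorem hardy_inequality
    {V : Type*} [Countable V]
    (E : V → V → ℝ) (m : V → ℝ) (W : V → ℝ)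
    (hE_symm : ∀ x y, E x y = E y x)
    (hE_nonneg : ∀ x y, 0 ≤ E x y)
    (hE_diag : ∀ x, E x x = 0)
    (hloc : ∀ x, {y | 0 < E x y}.Finite)
    (hm : ∀ x, 0 < m x)
    (hW : ∀ x, 0 < W x)
    (f : V → ℝ) (hf : (Function.support f).Finite) :
    (1 / 2) * ∑' x, ∑' y, E x y * (f x - f y) ^ 2 ≥
      ∑' x, (((∑' y, E x y * (W x - W y)) / m x) / W x) * (f x) ^ 2 * m x := by
  classical
  set F : Finset V := hf.toFinset with hFdef
  set T : V → Finset V := fun x => (hloc x).toFinset with hTdef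
  set U : Finset V := (F ∪ F.biUnion T) ∪ (F ∪ F.biUnion T).biUnion T with hUdef
  have hmemF : ∀ x, x ∈ F ↔ f x ≠ 0 := fun x => by
    simp [hFdef, Set.Finite.mem_toFinset, Function.mem_support]
  have hmemT : ∀ x y, y ∈ T x ↔ 0 < E x y := fun x y => by
    simp [hTdef, Set.Finite.mem_toFinset]
  have hE0 : ∀ x y, y ∉ T x → E x y = 0 := fun x y h =>
    le_antisymm (not_lt.mp fun hc => h ((hmemT x y).mpr hc)) (hE_nonneg x y)
  have hFU : F ⊆ U :=
    Finset.Subset.trans Finset.subset_union_left Finset.subset_union_left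
  have hTU : ∀ x ∈ F ∪ F.biUnion T, T x ⊆ U :=
    fun x hx => Finset.Subset.trans (Finset.subset_biUnion_of_mem T hx)
      Finset.subset_union_right
  have hf0 : ∀ x, x ∉ F → f x = 0 := fun x hx => by
    by_contra h; exact hx ((hmemF x).mpr h)
  -- terms of the LHS vanish when y ∉ U
  have hLy : ∀ x, ∀ y ∉ U, E x y * (f x - f y) ^ 2 = 0 := by
    intro x y hy
    have hfy : f y = 0 := hf0 y fun h => hy (hFU h)
    by_cases hfx : f x = 0
    · rw [hfx, hfy]; ring
    · have hxF : x ∈ F := (hmemF x).mpr hfx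
      have hE : E x y = 0 := by
        refine hE0 x y fun h => hy ?_
        exact hTU x (Finset.mem_union_left _ hxF) h
      rw [hE]; ring
  -- terms of the LHS vanish when x ∉ U
  have hLx : ∀ x, x ∉ U → ∀ y, E x y * (f x - f y) ^ 2 = 0 := by
    intro x hx y
    have hfx : f x = 0 := hf0 x fun h => hx (hFU h)
    by_cases hfy : f y = 0
    · rw [hfx, hfy]; ring
    · have hyF : y ∈ F := (hmemF y).mpr hfy
      have hE : E x y = 0 := by
        rw [hE_symm]
        refine hE0 y x fun h => hx ?_
        exact hTU y (Finset.mem_union_left _ hyF) h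
      rw [hE]; ring
  have hL : (∑' x, ∑' y, E x y * (f x - f y) ^ 2)
      = ∑ x ∈ U, ∑ y ∈ U, E x y * (f x - f y) ^ 2 := by
    have hL0 : ∀ x ∉ U, (∑' y, E x y * (f x - f y) ^ 2) = 0 := fun x hx => by
      rw [show (fun y => E x y * (f x - f y) ^ 2) = fun _ => (0 : ℝ) from
        funext (hLx x hx), tsum_zero]
    rw [tsum_eq_sum (s := U) hL0]
    exact Finset.sum_congr rfl fun x _ =>
      tsum_eq_sum (fun y hy => hLy x y hy)
  have hR : (∑' x, (((∑' y, E x y * (W x - W y)) / m x) / W x) * (f x) ^ 2 * m x)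
      = ∑ x ∈ U, (((∑ y ∈ U, E x y * (W x - W y)) / m x) / W x) * (f x) ^ 2 * m x := by
    rw [tsum_eq_sum (s := U)
      (fun x hx => by
        have hfx : f x = 0 := hf0 x fun h => hx (hFU h)
        rw [hfx]; ring)]
    refine Finset.sum_congr rfl fun x _ => ?_
    by_cases hfx : f x = 0
    · rw [hfx]; ring
    · have hxF : x ∈ F := (hmemF x).mpr hfx
      have : (∑' y, E x y * (W x - W y)) = ∑ y ∈ U, E x y * (W x - W y) := by
        refine tsum_eq_sum fun y hy => ?_
        have hE : E x y = 0 := by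
          refine hE0 x y fun h => hy ?_
          exact hTU x (Finset.mem_union_left _ hxF) h
        rw [hE]; ring
      rw [this]
  rw [ge_iff_le, hL, hR]
  -- simplify the RHS terms
  have hRsimp : ∀ x ∈ U,
      (((∑ y ∈ U, E x y * (W x - W y)) / m x) / W x) * (f x) ^ 2 * m x
        = ∑ y ∈ U, E x y * (W x - W y) * ((f x) ^ 2 / W x) := by
    intro x _
    rw [← Finset.sum_mul]
    generalize (∑ y ∈ U, E x y * (W x - W y)) = s
    field_simp [(hm x).ne', (hW x).ne']
  rw [Finset.sum_congr rfl hRsimp]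
  set A : V → V → ℝ := fun x y => E x y * (W x - W y) * ((f x) ^ 2 / W x) with hA
  have hswap : ∑ x ∈ U, ∑ y ∈ U, A x y = ∑ x ∈ U, ∑ y ∈ U, A y x :=
    Finset.sum_comm
  have h2 : ∑ x ∈ U, ∑ y ∈ U, A x y
      = (1 / 2) * ∑ x ∈ U, ∑ y ∈ U, (A x y + A y x) := by
    have : ∑ x ∈ U, ∑ y ∈ U, (A x y + A y x)
        = (∑ x ∈ U, ∑ y ∈ U, A x y) + ∑ x ∈ U, ∑ y ∈ U, A y x := by
      rw [← Finset.sum_add_distrib]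
      exact Finset.sum_congr rfl fun x _ => Finset.sum_add_distrib
    rw [this, ← hswap]; ring
  rw [h2]
  apply mul_le_mul_of_nonneg_left _ (by norm_num : (0:ℝ) ≤ 1/2)
  refine Finset.sum_le_sum fun x _ => Finset.sum_le_sum fun y _ => ?_
  have hAA : A x y + A y x
      = E x y * ((W x - W y) * ((f x) ^ 2 / W x - (f y) ^ 2 / W y)) := by
    rw [hA]
    simp only []
    rw [hE_symm y x]
    ring
  rw [hAA]
  exact mul_le_mul_of_nonneg_left
    (hardy_key (f x) (f y) (W x) (W y) (hW x) (hW y)) (hE_nonneg x y)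
end

section
/- Let Δ be the Laplacian of a locally finite weighted graph, q : V → ℝ, and U ⊆ V. Suppose there exist a ∈ (0,1) and k ≥ 0 such that for all finitely supported f supported in U, (1-a)⟨f, (deg+q)f⟩ - k‖f‖² ≤ ⟨f, Δf + qf⟩. Then for all such f, ⟨f, Δf + qf⟩ ≤ (1+a)⟨f, (deg+q)f⟩ + k‖f‖². (Upside-Down Lemma) -/
/-- **Upside-Down Lemma.** Let `Δ` be the Laplacian of a locally finite weighted
graph, `q : V → ℝ` and `U ⊆ V`. If there are `a ∈ (0,1)` and `k ≥ 0` such that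
for every finitely supported `f` supported in `U`,
`(1-a)⟨f,(deg+q)f⟩ - k‖f‖² ≤ ⟨f, Δf + qf⟩`, then for every such `f`,
`⟨f, Δf + qf⟩ ≤ (1+a)⟨f,(deg+q)f⟩ + k‖f‖²`. -/
theorem upside_down_lemma
    {V : Type*} [Countable V]
    (E : V → V → ℝ) (m : V → ℝ) (q : V → ℝ) (U : Set V)
    (hE_symm : ∀ x y, E x y = E y x)
    (hE_nonneg : ∀ x y, 0 ≤ E x y)
    (hE_diag : ∀ x, E x x = 0)
    (hloc : ∀ x, {y | 0 < E x y}.Finite)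
    (hm : ∀ x, 0 < m x)
    (a k : ℝ) (ha0 : 0 < a) (ha1 : a < 1) (hk : 0 ≤ k)
    (hyp : ∀ f : V → ℝ, (Function.support f).Finite → Function.support f ⊆ U →
      (1 - a) * (∑' x, ((∑' y, E x y) / m x + q x) * (f x) ^ 2 * m x)
          - k * (∑' x, (f x) ^ 2 * m x) ≤
        ∑' x, f x * ((∑' y, E x y * (f x - f y)) / m x + q x * f x) * m x) :
    ∀ f : V → ℝ, (Function.support f).Finite → Function.support f ⊆ U →
      ∑' x, f x * ((∑' y, E x y * (f x - f y)) / m x + q x * f x) * m x ≤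
        (1 + a) * (∑' x, ((∑' y, E x y) / m x + q x) * (f x) ^ 2 * m x)
          + k * (∑' x, (f x) ^ 2 * m x) := by
  intro f hf hfU
  classical
  set s := hf.toFinset with hs
  have hmemf : ∀ x, f x ≠ 0 → x ∈ s := fun x hx => hf.mem_toFinset.mpr hx
  set T : V → ℝ := fun x => ∑' y, E x y with hT
  -- key rewriting of the quadratic form for any g supported in s
  have key : ∀ g : V → ℝ, (∀ x, g x ≠ 0 → x ∈ s) →
      ∑' x, g x * ((∑' y, E x y * (g x - g y)) / m x + q x * g x) * m x
        = (∑ x ∈ s, (T x / m x + q x) * (g x) ^ 2 * m x)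
          - ∑ x ∈ s, ∑ y ∈ s, E x y * g x * g y := by
    intro g hg
    have inner : ∀ x, (∑' y, E x y * (g x - g y))
        = g x * T x - ∑ y ∈ s, E x y * g y := by
      intro x
      have hE0 : ∀ y, y ∉ (hloc x).toFinset → E x y = 0 := by
        intro y hy
        by_contra h
        exact hy ((hloc x).mem_toFinset.mpr (lt_of_le_of_ne (hE_nonneg x y) (Ne.symm h)))
      have h1 : Summable (fun y => E x y * g x) :=
        summable_of_ne_finset_zero (s := (hloc x).toFinset)
          (fun y hy => by rw [hE0 y hy, zero_mul])
      have h2 : Summable (fun y => E x y * g y) :=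
        summable_of_ne_finset_zero (s := (hloc x).toFinset)
          (fun y hy => by rw [hE0 y hy, zero_mul])
      have : (fun y => E x y * (g x - g y)) = fun y => E x y * g x - E x y * g y :=
        funext fun y => by ring
      rw [this, Summable.tsum_sub h1 h2]
      congr 1
      · rw [tsum_mul_right, mul_comm]
      · exact tsum_eq_sum (fun y hy => by
          rw [(by by_contra h; exact hy (hg y h) : g y = 0), mul_zero])
    rw [tsum_eq_sum (s := s) (fun x hx => by
      rw [(by by_contra h; exact hx (hg x h) : g x = 0), zero_mul, zero_mul])]
    rw [← Finset.sum_sub_distrib]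
    refine Finset.sum_congr rfl (fun x _ => ?_)
    rw [inner x]
    have hmx : m x ≠ 0 := (hm x).ne'
    have hsum : ∑ y ∈ s, E x y * g x * g y = g x * ∑ y ∈ s, E x y * g y := by
      rw [Finset.mul_sum]
      exact Finset.sum_congr rfl (fun y _ => by ring)
    rw [hsum]
    field_simp
    ring
  -- rewriting the (deg+q)-form and the norm as finite sums
  have keyB : ∀ g : V → ℝ, (∀ x, g x ≠ 0 → x ∈ s) →
      ∑' x, (T x / m x + q x) * (g x) ^ 2 * m x
        = ∑ x ∈ s, (T x / m x + q x) * (g x) ^ 2 * m x := by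
    intro g hg
    exact tsum_eq_sum (fun x hx => by
      rw [(by by_contra h; exact hx (hg x h) : g x = 0)]; ring)
  have keyN : ∀ g : V → ℝ, (∀ x, g x ≠ 0 → x ∈ s) →
      ∑' x, (g x) ^ 2 * m x = ∑ x ∈ s, (g x) ^ 2 * m x := by
    intro g hg
    exact tsum_eq_sum (fun x hx => by
      rw [(by by_contra h; exact hx (hg x h) : g x = 0)]; ring)
  -- apply hypothesis to |f|
  set g : V → ℝ := fun x => |f x| with hgdef
  have hsupp : Function.support g = Function.support f := by
    ext x; simp [hgdef, Function.mem_support, abs_eq_zero]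
  have hgfin : (Function.support g).Finite := hsupp ▸ hf
  have hgU : Function.support g ⊆ U := hsupp ▸ hfU
  have hmemg : ∀ x, g x ≠ 0 → x ∈ s := fun x hx =>
    hmemf x (fun h => hx (by simp [hgdef, h]))
  have hg2 : ∀ x, (g x) ^ 2 = (f x) ^ 2 := fun x => sq_abs (f x)
  have H := hyp g hgfin hgU
  rw [key g hmemg, keyB g hmemg, keyN g hmemg] at H
  simp only [hg2] at H
  -- positivity of the combined cross term
  have cross : 0 ≤ (∑ x ∈ s, ∑ y ∈ s, E x y * f x * f y)
      + ∑ x ∈ s, ∑ y ∈ s, E x y * g x * g y := by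
    rw [← Finset.sum_add_distrib]
    refine Finset.sum_nonneg (fun x _ => ?_)
    rw [← Finset.sum_add_distrib]
    refine Finset.sum_nonneg (fun y _ => ?_)
    have : E x y * f x * f y + E x y * g x * g y
        = E x y * (f x * f y + |f x * f y|) := by
      rw [abs_mul]; simp only [hgdef]; ring
    rw [this]
    exact mul_nonneg (hE_nonneg x y) (by linarith [neg_abs_le (f x * f y), abs_nonneg (f x * f y)])
  rw [key f hmemf, keyB f hmemf, keyN f hmemf]
  linarith
end

section
/- For any finitely supported function f on a locally finite weighted graph, ⟨f, (2·deg - Δ)f⟩ = (1/2)∑_{x,y} E(x,y)|f(x)+f(y)|², and consequently ⟨f, (2·deg - Δ)f⟩ ≥ ⟨|f|, Δ|f|⟩, where |f| denotes the pointwise absolute value of f. -/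
private lemma double_sum_swap {V : Type*} (T : Finset V) (w : V → V → ℝ)
    (hw : ∀ x y, w x y = w y x) (F : V → V → ℝ) :
    ∑ x ∈ T, ∑ y ∈ T, w x y * F x y = ∑ x ∈ T, ∑ y ∈ T, w x y * F y x := by
  rw [Finset.sum_comm]
  exact Finset.sum_congr rfl fun y _ => Finset.sum_congr rfl fun x _ => by rw [hw]

private lemma abs_sub_sq_le (a b : ℝ) : (|a| - |b|) ^ 2 ≤ (a + b) ^ 2 := by
  nlinarith [neg_abs_le (a * b), abs_mul a b, sq_abs a, sq_abs b, abs_nonneg a, abs_nonneg b]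

/-- For any finitely supported function `f` on a locally finite weighted graph,
`⟨f, (2·deg - Δ)f⟩ = (1/2)∑_{x,y} E x y (f x + f y)²`, and consequently
`⟨f, (2·deg - Δ)f⟩ ≥ ⟨|f|, Δ|f|⟩`. -/
theorem two_deg_sub_lap_identity
    {V : Type*} [Countable V]
    (E : V → V → ℝ) (m : V → ℝ)
    (hE_symm : ∀ x y, E x y = E y x)
    (hE_nonneg : ∀ x y, 0 ≤ E x y)
    (hE_diag : ∀ x, E x x = 0)
    (hloc : ∀ x, {y | 0 < E x y}.Finite)
    (hm : ∀ x, 0 < m x)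
    (f : V → ℝ) (hf : (Function.support f).Finite) :
    (∑' x, f x * (2 * ((∑' y, E x y) / m x) * f x
        - (∑' y, E x y * (f x - f y)) / m x) * m x
      = (1 / 2) * ∑' x, ∑' y, E x y * (f x + f y) ^ 2) ∧
    (∑' x, f x * (2 * ((∑' y, E x y) / m x) * f x
        - (∑' y, E x y * (f x - f y)) / m x) * m x
      ≥ ∑' x, |f x| * ((∑' y, E x y * (|f x| - |f y|)) / m x) * m x) := by
  classical
  set s : Finset V := hf.toFinset with hs
  set T : Finset V := s ∪ s.biUnion (fun y => (hloc y).toFinset) with hT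
  have hfx0 : ∀ x, x ∉ T → f x = 0 := by
    intro x hx
    by_contra h
    exact hx (Finset.mem_union_left _ (by simpa [hs, Set.Finite.mem_toFinset] using h))
  have hnbr : ∀ x y, f y ≠ 0 → E x y ≠ 0 → x ∈ T := by
    intro x y hfy hExy
    refine Finset.mem_union_right _ (Finset.mem_biUnion.mpr ⟨y, ?_, ?_⟩)
    · simpa [hs, Set.Finite.mem_toFinset] using hfy
    · have h1 : E y x ≠ 0 := by rw [hE_symm]; exact hExy
      exact (hloc y).mem_toFinset.mpr (lt_of_le_of_ne (hE_nonneg y x) (Ne.symm h1))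
  -- key1 : LHS tsum as finite double sum
  have key1 : (∑' x, f x * (2 * ((∑' y, E x y) / m x) * f x
        - (∑' y, E x y * (f x - f y)) / m x) * m x)
      = ∑ x ∈ T, ∑ y ∈ T, E x y * (f x ^ 2 + f x * f y) := by
    rw [tsum_eq_sum (s := T) (fun x hx => by simp [hfx0 x hx])]
    refine Finset.sum_congr rfl fun x hx => ?_
    by_cases hfx : f x = 0
    · simp [hfx]
    · have hE0x : ∀ y ∉ T, E x y = 0 := by
        intro y hy
        by_contra h
        exact hy (hnbr y x hfx (by rw [hE_symm]; exact h))
      rw [tsum_eq_sum (s := T) hE0x,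
          tsum_eq_sum (s := T) (fun y hy => by rw [hE0x y hy]; ring)]
      have hmx : m x ≠ 0 := (hm x).ne'
      have hexp : ∑ y ∈ T, E x y * (f x ^ 2 + f x * f y)
          = 2 * f x ^ 2 * (∑ y ∈ T, E x y) - f x * ∑ y ∈ T, E x y * (f x - f y) := by
        rw [Finset.mul_sum, Finset.mul_sum, ← Finset.sum_sub_distrib]
        exact Finset.sum_congr rfl fun y _ => by ring
      rw [hexp]
      field_simp
  -- key2 : RHS double tsum as finite double sum
  have key2 : (∑' x, ∑' y, E x y * (f x + f y) ^ 2)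
      = ∑ x ∈ T, ∑ y ∈ T, E x y * (f x + f y) ^ 2 := by
    rw [tsum_eq_sum (s := T) ?_]
    · refine Finset.sum_congr rfl fun x hx => ?_
      refine tsum_eq_sum (s := T) fun y hy => ?_
      rcases eq_or_ne (f x) 0 with h | h
      · rw [h, hfx0 y hy]; ring
      · have hE : E x y = 0 := by
          by_contra h2
          exact hy (hnbr y x h (by rw [hE_symm]; exact h2))
        rw [hE]; ring
    · intro x hx
      have hz : ∀ y, E x y * (f x + f y) ^ 2 = 0 := by
        intro y
        rcases eq_or_ne (f y) 0 with h | h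
        · rw [hfx0 x hx, h]; ring
        · rcases eq_or_ne (E x y) 0 with h2 | h2
          · rw [h2]; ring
          · exact absurd (hnbr x y h h2) hx
      exact (tsum_congr hz).trans tsum_zero
  -- key3 : abs RHS tsum as finite double sum
  have key3 : (∑' x, |f x| * ((∑' y, E x y * (|f x| - |f y|)) / m x) * m x)
      = ∑ x ∈ T, ∑ y ∈ T, E x y * (|f x| ^ 2 - |f x| * |f y|) := by
    rw [tsum_eq_sum (s := T) (fun x hx => by simp [hfx0 x hx])]
    refine Finset.sum_congr rfl fun x hx => ?_
    by_cases hfx : f x = 0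
    · simp [hfx]
    · have hE0x : ∀ y ∉ T, E x y = 0 := by
        intro y hy
        by_contra h
        exact hy (hnbr y x hfx (by rw [hE_symm]; exact h))
      rw [tsum_eq_sum (s := T) (fun y hy => by rw [hE0x y hy]; ring)]
      have hmx : m x ≠ 0 := (hm x).ne'
      have hexp : ∑ y ∈ T, E x y * (|f x| ^ 2 - |f x| * |f y|)
          = |f x| * ∑ y ∈ T, E x y * (|f x| - |f y|) := by
        rw [Finset.mul_sum]
        exact Finset.sum_congr rfl fun y _ => by ring
      rw [hexp]
      field_simp
  -- abbreviations
  have hswapf : ∑ x ∈ T, ∑ y ∈ T, E x y * f x ^ 2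
      = ∑ x ∈ T, ∑ y ∈ T, E x y * f y ^ 2 :=
    double_sum_swap T E hE_symm (fun x _ => f x ^ 2)
  have hswapa : ∑ x ∈ T, ∑ y ∈ T, E x y * |f x| ^ 2
      = ∑ x ∈ T, ∑ y ∈ T, E x y * |f y| ^ 2 :=
    double_sum_swap T E hE_symm (fun x _ => |f x| ^ 2)
  have e1 : ∑ x ∈ T, ∑ y ∈ T, E x y * (f x ^ 2 + f x * f y)
      = (∑ x ∈ T, ∑ y ∈ T, E x y * f x ^ 2)
        + ∑ x ∈ T, ∑ y ∈ T, E x y * (f x * f y) := by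
    simp only [mul_add, Finset.sum_add_distrib]
  have e2 : ∑ x ∈ T, ∑ y ∈ T, E x y * (f x + f y) ^ 2
      = (∑ x ∈ T, ∑ y ∈ T, E x y * f x ^ 2)
        + ((∑ x ∈ T, ∑ y ∈ T, E x y * (f x * f y))
          + ((∑ x ∈ T, ∑ y ∈ T, E x y * (f x * f y))
            + ∑ x ∈ T, ∑ y ∈ T, E x y * f y ^ 2)) := by
    have h : ∀ x y, E x y * (f x + f y) ^ 2
        = E x y * f x ^ 2 + (E x y * (f x * f y)
          + (E x y * (f x * f y) + E x y * f y ^ 2)) := fun x y => by ring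
    simp only [h, Finset.sum_add_distrib]
  have hfirst : (∑' x, f x * (2 * ((∑' y, E x y) / m x) * f x
        - (∑' y, E x y * (f x - f y)) / m x) * m x)
      = (1 / 2) * ∑' x, ∑' y, E x y * (f x + f y) ^ 2 := by
    rw [key1, key2, e1, e2]
    linarith [hswapf]
  refine ⟨hfirst, ?_⟩
  rw [hfirst, key2, key3]
  -- expand abs sums
  have e3 : ∑ x ∈ T, ∑ y ∈ T, E x y * (|f x| ^ 2 - |f x| * |f y|)
      = (∑ x ∈ T, ∑ y ∈ T, E x y * |f x| ^ 2)
        - ∑ x ∈ T, ∑ y ∈ T, E x y * (|f x| * |f y|) := by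
    simp only [mul_sub, Finset.sum_sub_distrib]
  have e4 : ∑ x ∈ T, ∑ y ∈ T, E x y * (|f x| - |f y|) ^ 2
      = (∑ x ∈ T, ∑ y ∈ T, E x y * |f x| ^ 2)
        + ((∑ x ∈ T, ∑ y ∈ T, E x y * |f y| ^ 2)
          - ((∑ x ∈ T, ∑ y ∈ T, E x y * (|f x| * |f y|))
            + ∑ x ∈ T, ∑ y ∈ T, E x y * (|f x| * |f y|))) := by
    have h : ∀ x y, E x y * (|f x| - |f y|) ^ 2
        = E x y * |f x| ^ 2 + (E x y * |f y| ^ 2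
          - (E x y * (|f x| * |f y|) + E x y * (|f x| * |f y|))) := fun x y => by ring
    simp only [h, Finset.sum_add_distrib, Finset.sum_sub_distrib]
  have hcmp : ∑ x ∈ T, ∑ y ∈ T, E x y * (|f x| - |f y|) ^ 2
      ≤ ∑ x ∈ T, ∑ y ∈ T, E x y * (f x + f y) ^ 2 := by
    refine Finset.sum_le_sum fun x _ => Finset.sum_le_sum fun y _ => ?_
    exact mul_le_mul_of_nonneg_left (abs_sub_sq_le (f x) (f y)) (hE_nonneg x y)
  rw [e3]
  rw [e4] at hcmp
  linarith [hswapa, hcmp]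
end

section
/- Let a graph admit a 1-dimensional decomposition (S_n) and suppose there are w : V → (0,∞) and a > 0 such that η₊(x) - η₋(x) ≥ a·w(x) for all x ∈ U ⊆ V. Then for every finite K ⊆ U, the boundary quantity L(∂K) = ∑_{x∈K, y∉K} E(x,y) satisfies L(∂K) ≥ a·w(K), where w(K) = ∑_{x∈K} w(x). Hence the isoperimetric constant α_w(U) = inf over finite K ⊆ U of L(∂K)/w(K) satisfies α_w(U) ≥ a. -/
/-- Isoperimetric estimate from a radial growth condition.  If a graph has a
1-dimensional decomposition (level function `ℓ` with finite levels and edges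
only between levels differing by at most one) and `η₊(x) - η₋(x) ≥ a·w(x)` on
`U`, then for every finite `K ⊆ U` one has `L(∂K) ≥ a·w(K)`; hence the
isoperimetric ratio of every nonempty finite `K ⊆ U` is at least `a`. -/
theorem isoperimetric_lower_bound
    {V : Type*} [Countable V] [DecidableEq V]
    (E : V → V → ℝ) (w : V → ℝ) (ℓ : V → ℕ) (U : Set V) (a : ℝ)
    (hE_symm : ∀ x y, E x y = E y x)
    (hE_nonneg : ∀ x y, 0 ≤ E x y)
    (hE_diag : ∀ x, E x x = 0)
    (hloc : ∀ x, {y | 0 < E x y}.Finite)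
    (hlev_fin : ∀ n, {x | ℓ x = n}.Finite)
    (hlev : ∀ x y, 0 < E x y → ℓ x ≤ ℓ y + 1 ∧ ℓ y ≤ ℓ x + 1)
    (hw : ∀ x, 0 < w x) (ha : 0 < a)
    (hcurv : ∀ x ∈ U,
      a * w x ≤ (∑' y, if ℓ y = ℓ x + 1 then E x y else 0)
                  - (∑' y, if ℓ y + 1 = ℓ x then E x y else 0))
    (K : Finset V) (hK : ↑K ⊆ U) :
    a * ∑ x ∈ K, w x ≤ ∑ x ∈ K, ∑' y, (if y ∈ K then 0 else E x y) ∧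
    (K.Nonempty →
      a ≤ (∑ x ∈ K, ∑' y, (if y ∈ K then 0 else E x y)) / ∑ x ∈ K, w x) := by
  classical
  set f : V → V → ℝ := fun x y =>
    (if ℓ y = ℓ x + 1 then E x y else 0) - (if ℓ y + 1 = ℓ x then E x y else 0) with hf
  have hE0 : ∀ x y, y ∉ (hloc x).toFinset → E x y = 0 := by
    intro x y hy
    simp only [Set.Finite.mem_toFinset, Set.mem_setOf_eq, not_lt] at hy
    exact le_antisymm hy (hE_nonneg x y)
  have hf0 : ∀ x y, E x y = 0 → f x y = 0 := by
    intro x y h; simp [hf, h]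
  -- antisymmetry
  have hanti : ∀ x y, f x y = - f y x := by
    intro x y
    simp only [hf]
    rw [hE_symm y x]
    by_cases h1 : ℓ y = ℓ x + 1
    · rw [if_pos h1, if_neg (by omega : ¬ ℓ y + 1 = ℓ x),
        if_neg (by omega : ¬ ℓ x = ℓ y + 1), if_pos (by omega : ℓ x + 1 = ℓ y)]
      ring
    · by_cases h2 : ℓ y + 1 = ℓ x
      · rw [if_neg h1, if_pos h2, if_pos (by omega : ℓ x = ℓ y + 1),
          if_neg (by omega : ¬ ℓ x + 1 = ℓ y)]
        ring
      · rw [if_neg h1, if_neg h2, if_neg (by omega : ¬ ℓ x = ℓ y + 1),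
          if_neg (by omega : ¬ ℓ x + 1 = ℓ y)]
        ring
  have hfle : ∀ x y, f x y ≤ E x y := by
    intro x y
    simp only [hf]
    by_cases h1 : ℓ y = ℓ x + 1
    · rw [if_pos h1, if_neg (by omega : ¬ ℓ y + 1 = ℓ x), sub_zero]
    · rw [if_neg h1, zero_sub]
      by_cases h2 : ℓ y + 1 = ℓ x
      · rw [if_pos h2]; nlinarith [hE_nonneg x y]
      · rw [if_neg h2, neg_zero]; exact hE_nonneg x y
  -- finsets
  set T : V → Finset V := fun x => (hloc x).toFinset ∪ K with hT
  have hTsub : ∀ x, K ⊆ T x := fun x => Finset.subset_union_right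
  have hE0' : ∀ x y, y ∉ T x → E x y = 0 := by
    intro x y hy
    exact hE0 x y (fun h => hy (Finset.mem_union_left _ h))
  -- tsum of boundary sum
  have hbdry : ∀ x, (∑' y, (if y ∈ K then 0 else E x y))
      = ∑ y ∈ (T x).filter (fun y => y ∉ K), E x y := by
    intro x
    rw [tsum_eq_sum (s := T x) (fun y hy => by simp [hE0' x y hy])]
    rw [Finset.sum_filter]
    apply Finset.sum_congr rfl
    intro y _
    by_cases h : y ∈ K <;> simp [h]
  have hmain : a * ∑ x ∈ K, w x ≤ ∑ x ∈ K, ∑' y, (if y ∈ K then 0 else E x y) := by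
    have h1 : ∀ x ∈ K, a * w x ≤ ∑ y ∈ T x, f x y := by
      intro x hx
      have hc := hcurv x (hK hx)
      have e1 : (∑' y, if ℓ y = ℓ x + 1 then E x y else 0)
          = ∑ y ∈ T x, (if ℓ y = ℓ x + 1 then E x y else 0) :=
        tsum_eq_sum (fun y hy => by simp [hE0' x y hy])
      have e2 : (∑' y, if ℓ y + 1 = ℓ x then E x y else 0)
          = ∑ y ∈ T x, (if ℓ y + 1 = ℓ x then E x y else 0) :=
        tsum_eq_sum (fun y hy => by simp [hE0' x y hy])
      rw [e1, e2, ← Finset.sum_sub_distrib] at hc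
      exact hc
    have h2 : a * ∑ x ∈ K, w x ≤ ∑ x ∈ K, ∑ y ∈ T x, f x y := by
      rw [Finset.mul_sum]
      exact Finset.sum_le_sum h1
    -- split each inner sum
    have hfilter : ∀ x, (T x).filter (fun y => y ∈ K) = K := by
      intro x; ext y
      simp only [Finset.mem_filter]
      exact ⟨fun h => h.2, fun h => ⟨hTsub x h, h⟩⟩
    have hsplit : ∀ x, ∑ y ∈ T x, f x y
        = (∑ y ∈ K, f x y) + ∑ y ∈ (T x).filter (fun y => y ∉ K), f x y := by
      intro x
      rw [← Finset.sum_filter_add_sum_filter_not (T x) (fun y => y ∈ K), hfilter x]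
    have hzero : ∑ x ∈ K, ∑ y ∈ K, f x y = 0 := by
      have h : ∑ x ∈ K, ∑ y ∈ K, f x y = - ∑ x ∈ K, ∑ y ∈ K, f x y := by
        nth_rewrite 1 [Finset.sum_comm]
        rw [← Finset.sum_neg_distrib]
        refine Finset.sum_congr rfl (fun x _ => ?_)
        rw [← Finset.sum_neg_distrib]
        exact Finset.sum_congr rfl (fun y _ => hanti y x)
      linarith
    have h3 : ∑ x ∈ K, ∑ y ∈ T x, f x y
        ≤ ∑ x ∈ K, ∑ y ∈ (T x).filter (fun y => y ∉ K), E x y := by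
      calc ∑ x ∈ K, ∑ y ∈ T x, f x y
          = ∑ x ∈ K, ((∑ y ∈ K, f x y) + ∑ y ∈ (T x).filter (fun y => y ∉ K), f x y) :=
            Finset.sum_congr rfl (fun x _ => hsplit x)
        _ = (∑ x ∈ K, ∑ y ∈ K, f x y)
              + ∑ x ∈ K, ∑ y ∈ (T x).filter (fun y => y ∉ K), f x y :=
            Finset.sum_add_distrib
        _ = ∑ x ∈ K, ∑ y ∈ (T x).filter (fun y => y ∉ K), f x y := by
            rw [hzero, zero_add]
        _ ≤ ∑ x ∈ K, ∑ y ∈ (T x).filter (fun y => y ∉ K), E x y :=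
            Finset.sum_le_sum (fun x _ =>
              Finset.sum_le_sum (fun y _ => hfle x y))
    have h4 : ∑ x ∈ K, ∑' y, (if y ∈ K then 0 else E x y)
        = ∑ x ∈ K, ∑ y ∈ (T x).filter (fun y => y ∉ K), E x y :=
      Finset.sum_congr rfl (fun x _ => hbdry x)
    rw [h4]
    linarith
  refine ⟨hmain, fun hne => ?_⟩
  have hwpos : 0 < ∑ x ∈ K, w x := Finset.sum_pos (fun x _ => hw x) hne
  rw [le_div_iff₀ hwpos]
  exact hmain
end

section
/- Let a locally finite weighted graph have a 1-dimensional decomposition, and let c > 1. Define W(x) = c^{-max(|x|, n₀)} for a fixed n₀ ∈ ℕ such that deg₊(x) - c·deg₋(x) ≥ 0 whenever |x| ≥ n₀. Then for all x ∈ V, ΔW(x) ≥ φ_c(x)·W(x), where φ_c(x) = ((c-1)/c)(deg₊(x) - c·deg₋(x)) if |x| > n₀ and φ_c(x) = 0 otherwise. -/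
/-- Construction of a super-harmonic function.  Let `c > 1` and suppose
`deg₊(x) - c·deg₋(x) ≥ 0` whenever `|x| ≥ n₀`.  With
`W(x) = c^{-max(|x|,n₀)}` one has `ΔW(x) ≥ φ_c(x)·W(x)` for all `x`, where
`φ_c(x) = ((c-1)/c)(deg₊(x) - c·deg₋(x))` if `|x| > n₀` and `0` otherwise. -/
theorem superharmonic_from_curvature
    {V : Type*} [Countable V]
    (E : V → V → ℝ) (m : V → ℝ) (ℓ : V → ℕ) (c : ℝ) (n₀ : ℕ)
    (hE_symm : ∀ x y, E x y = E y x)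
    (hE_nonneg : ∀ x y, 0 ≤ E x y)
    (hE_diag : ∀ x, E x x = 0)
    (hloc : ∀ x, {y | 0 < E x y}.Finite)
    (hlev_fin : ∀ n, {x | ℓ x = n}.Finite)
    (hlev : ∀ x y, 0 < E x y → ℓ x ≤ ℓ y + 1 ∧ ℓ y ≤ ℓ x + 1)
    (hm : ∀ x, 0 < m x) (hc : 1 < c)
    (degp degm : V → ℝ)
    (hdegp : ∀ x, degp x = (∑' y, if ℓ y = ℓ x + 1 then E x y else 0) / m x)
    (hdegm : ∀ x, degm x = (∑' y, if ℓ y + 1 = ℓ x then E x y else 0) / m x)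
    (hn₀ : ∀ x, n₀ ≤ ℓ x → 0 ≤ degp x - c * degm x) :
    ∀ x, (∑' y, E x y * (c ^ (-(max (ℓ x) n₀ : ℤ)) - c ^ (-(max (ℓ y) n₀ : ℤ)))) / m x
      ≥ (if n₀ < ℓ x then ((c - 1) / c) * (degp x - c * degm x) else 0)
          * c ^ (-(max (ℓ x) n₀ : ℤ)) := by
  intro x
  have hc0 : (0:ℝ) < c := lt_trans one_pos hc
  have hcne : c ≠ 0 := ne_of_gt hc0
  have hmx := hm x
  by_cases hx : n₀ < ℓ x
  · -- main case: compute the sum exactly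
    have hmaxx : max (ℓ x) n₀ = ℓ x := max_eq_left hx.le
    set g : V → ℝ := fun y => if ℓ y = ℓ x + 1 then E x y else 0 with hg
    set h : V → ℝ := fun y => if ℓ y + 1 = ℓ x then E x y else 0 with hh
    have hEzero : ∀ y, y ∉ (hloc x).toFinset → E x y = 0 := by
      intro y hy
      simp only [Set.Finite.mem_toFinset, Set.mem_setOf_eq, not_lt] at hy
      exact le_antisymm hy (hE_nonneg x y)
    have hsg : Summable g := by
      apply summable_of_ne_finset_zero (s := (hloc x).toFinset)
      intro y hy; simp [hg, hEzero y hy]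
    have hsh : Summable h := by
      apply summable_of_ne_finset_zero (s := (hloc x).toFinset)
      intro y hy; simp [hh, hEzero y hy]
    set W : V → ℝ := fun y => (c : ℝ) ^ (-(max (ℓ y) n₀ : ℤ)) with hW
    have hpt : ∀ y, E x y * (W x - W y)
        = W x * ((c - 1) / c) * g y + W x * (1 - c) * h y := by
      intro y
      rcases eq_or_ne (ℓ y) (ℓ x + 1) with h1 | h1
      · have hgy : g y = E x y := by simp [hg, h1]
        have hhy : h y = 0 := by simp [hh, h1]; omega
        have hWy : W y = W x * c⁻¹ := by
          show c ^ (-(max (ℓ y : ℤ) n₀)) = c ^ (-(max (ℓ x : ℤ) n₀)) * c⁻¹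
          rw [show (-(max (ℓ y : ℤ) n₀)) = (-(max (ℓ x : ℤ) n₀)) - 1 by omega,
            zpow_sub_one₀ hcne]
        rw [hgy, hhy, hWy]
        field_simp
        ring
      rcases eq_or_ne (ℓ y + 1) (ℓ x) with h2 | h2
      · have hgy : g y = 0 := by simp [hg, h1]
        have hhy : h y = E x y := by simp [hh, h2]
        have hWy : W y = W x * c := by
          show c ^ (-(max (ℓ y : ℤ) n₀)) = c ^ (-(max (ℓ x : ℤ) n₀)) * c
          rw [show (-(max (ℓ y : ℤ) n₀)) = (-(max (ℓ x : ℤ) n₀)) + 1 by omega,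
            zpow_add_one₀ hcne]
        rw [hgy, hhy, hWy]
        ring
      rcases eq_or_ne (ℓ y) (ℓ x) with h3 | h3
      · have hgy : g y = 0 := by simp [hg, h1]
        have hhy : h y = 0 := by simp [hh, h2]
        have hWy : W y = W x := by simp [hW, h3]
        rw [hgy, hhy, hWy]
        ring
      · have hE0 : E x y = 0 := by
          by_contra hne
          have hpos : 0 < E x y := (hE_nonneg x y).lt_of_ne (Ne.symm hne)
          have := hlev x y hpos
          omega
        have hgy : g y = 0 := by simp [hg, hE0]
        have hhy : h y = 0 := by simp [hh, hE0]
        rw [hgy, hhy, hE0]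
        ring
    have htsum : (∑' y, E x y * (W x - W y))
        = W x * ((c - 1) / c) * (∑' y, g y) + W x * (1 - c) * (∑' y, h y) := by
      calc (∑' y, E x y * (W x - W y))
          = ∑' y, (W x * ((c - 1) / c) * g y + W x * (1 - c) * h y) := by
            exact tsum_congr hpt
        _ = (∑' y, W x * ((c - 1) / c) * g y) + (∑' y, W x * (1 - c) * h y) := by
            exact Summable.tsum_add (hsg.mul_left _) (hsh.mul_left _)
        _ = W x * ((c - 1) / c) * (∑' y, g y) + W x * (1 - c) * (∑' y, h y) := by
            rw [tsum_mul_left, tsum_mul_left]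
    have hgsum : (∑' y, g y) = degp x * m x := by
      have := hdegp x
      field_simp at this
      linarith [this]
    have hhsum : (∑' y, h y) = degm x * m x := by
      have := hdegm x
      field_simp at this
      linarith [this]
    rw [if_pos hx]
    apply ge_of_eq
    show (∑' y, E x y * (W x - W y)) / m x
        = ((c - 1) / c) * (degp x - c * degm x) * W x
    rw [htsum, hgsum, hhsum]
    field_simp
    ring
  · rw [if_neg hx, zero_mul]
    push_neg at hx
    apply div_nonneg _ hmx.le
    apply tsum_nonneg
    intro y
    apply mul_nonneg (hE_nonneg x y)
    rw [sub_nonneg]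
    apply zpow_le_zpow_right₀ hc.le
    omega
end

section
/- Suppose deg₊(x) - deg₋(x) ≥ a and deg₊(x) + deg₋(x) ≤ D for all x with |x| > n₀, where 0 < a ≤ D. Then with c = √((D+a)/(D-a)) (when a < D) the function ψ_c(x) = deg₊(x)(1-1/c) + deg₋(x)(1-c) satisfies ψ_c(x) ≥ D - √(D² - a²) for all x with |x| > n₀. -/
/-- Key elementary inequality: if `deg₊ - deg₋ ≥ a` and `deg₊ + deg₋ ≤ D`
with `0 < a < D`, then with `c = √((D+a)/(D-a))`,
`deg₊(1 - 1/c) + deg₋(1 - c) ≥ D - √(D² - a²)`. -/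
theorem psi_lower_bound
    (dp dm a D : ℝ)
    (hdp : 0 ≤ dp) (hdm : 0 ≤ dm)
    (ha : 0 < a) (haD : a < D)
    (h1 : a ≤ dp - dm) (h2 : dp + dm ≤ D) :
    D - Real.sqrt (D ^ 2 - a ^ 2) ≤
      dp * (1 - 1 / Real.sqrt ((D + a) / (D - a)))
        + dm * (1 - Real.sqrt ((D + a) / (D - a))) := by
  have hDa : (0:ℝ) < D - a := by linarith
  have hDpa : (0:ℝ) < D + a := by linarith
  set s := Real.sqrt (D - a) with hs
  set t := Real.sqrt (D + a) with ht
  have hs0 : 0 < s := Real.sqrt_pos.mpr hDa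
  have ht0 : 0 < t := Real.sqrt_pos.mpr hDpa
  have hs2 : s ^ 2 = D - a := Real.sq_sqrt hDa.le
  have ht2 : t ^ 2 = D + a := Real.sq_sqrt hDpa.le
  have hc : Real.sqrt ((D + a) / (D - a)) = t / s := Real.sqrt_div hDpa.le _
  have hsqrt : Real.sqrt (D ^ 2 - a ^ 2) = s * t := by
    rw [show D ^ 2 - a ^ 2 = (D - a) * (D + a) by ring, Real.sqrt_mul hDa.le]
  rw [hc, hsqrt]
  have h1div : 1 / (t / s) = s / t := by field_simp
  rw [h1div]
  have hst : s * t ≤ D := by nlinarith [mul_pos hs0 ht0]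
  have key : 0 ≤ (dp + dm - D) * (s * t - D) :=
    mul_nonneg_of_nonpos_of_nonpos (by linarith) (by linarith)
  have haux : 0 ≤ a * (dp - dm - a) := mul_nonneg ha.le (by linarith)
  have hstpos : (0:ℝ) < s * t := mul_pos hs0 ht0
  have main : (D - s * t) * (s * t) ≤
      (dp * (1 - s / t) + dm * (1 - t / s)) * (s * t) := by
    have hrw : (dp * (1 - s / t) + dm * (1 - t / s)) * (s * t)
        = (dp + dm) * (s * t) - dp * s ^ 2 - dm * t ^ 2 := by
      field_simp
      ring
    rw [hrw, hs2, ht2]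
    nlinarith [key, haux]
  exact le_of_mul_le_mul_right main hstpos
end

section
/- On a weakly spherically symmetric graph, the algebraic Laplacian commutes with the spherical averaging operator: for every function f, Δ(M̃f) = M̃(Δf), where M̃f(x) = (1/m(S_n))∑_{x̃∈S_n} f(x̃)m(x̃) for x ∈ S_n. -/
variable {V : Type*}

/-- The (algebraic) Laplacian of a weighted graph. -/
noncomputable def lap (E : V → V → ℝ) (m : V → ℝ) (f : V → ℝ) (x : V) : ℝ :=
  (∑' y, E x y * (f x - f y)) / m x

/-- The spherical averaging operator along a level function `ℓ`:
`M̃f(x) = (1/m(S_{|x|})) ∑_{x̃ ∈ S_{|x|}} f(x̃) m(x̃)`. -/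
noncomputable def sphAvg (ℓ : V → ℕ) (m : V → ℝ) (f : V → ℝ) (x : V) : ℝ :=
  (∑' y, if ℓ y = ℓ x then f y * m y else 0)
    / (∑' y, if ℓ y = ℓ x then m y else 0)

private lemma tsum_ite_sum {p : V → Prop} [DecidablePred p] {s : Finset V}
    (hs : ∀ y, p y ↔ y ∈ s) (g : V → ℝ) :
    ∑' y, (if p y then g y else 0) = ∑ y ∈ s, g y := by
  rw [tsum_eq_sum (s := s) (f := fun y => if p y then g y else 0)
    (fun b hb => if_neg (fun h => hb ((hs b).1 h)))]
  exact Finset.sum_congr rfl fun y hy => if_pos ((hs y).2 hy)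

private lemma alg (dpn dmn dpl dmu Fn Mn F1 M1 Fl Ml mx : ℝ)
    (hmx : mx ≠ 0) (hMn : Mn ≠ 0)
    (hM1 : M1 = 0 → F1 = 0) (hMl : Ml = 0 → Fl = 0)
    (I1 : dpn * Mn = dmu * M1) (I2 : dmn * Mn = dpl * Ml) :
    (dpn * mx * (Fn / Mn - F1 / M1) + dmn * mx * (Fn / Mn - Fl / Ml)) / mx
      = ((dpn * Fn - dmu * F1) + (dmn * Fn - dpl * Fl)) / Mn := by
  have e0 : Fn / Mn * Mn = Fn := div_mul_cancel₀ Fn hMn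
  have e1 : dpn * (F1 / M1) * Mn = dmu * F1 := by
    by_cases h : M1 = 0
    · rw [h, div_zero, hM1 h]; ring
    · field_simp
      linear_combination F1 * I1
  have e2 : dmn * (Fl / Ml) * Mn = dpl * Fl := by
    by_cases h : Ml = 0
    · rw [h, div_zero, hMl h]; ring
    · field_simp
      linear_combination Fl * I2
  rw [div_eq_div_iff hmx hMn]
  linear_combination (mx * dpn) * e0 + (mx * dmn) * e0 - mx * e1 - mx * e2

/-- On a weakly spherically symmetric graph, the algebraic Laplacian commutes
with the spherical averaging operator: `Δ(M̃f) = M̃(Δf)` pointwise. -/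
theorem lap_comm_sphAvg
    [Countable V]
    (E : V → V → ℝ) (m : V → ℝ) (ℓ : V → ℕ)
    (hE_symm : ∀ x y, E x y = E y x)
    (hE_nonneg : ∀ x y, 0 ≤ E x y)
    (hE_diag : ∀ x, E x x = 0)
    (hloc : ∀ x, {y | 0 < E x y}.Finite)
    (hlev_fin : ∀ n, {x | ℓ x = n}.Finite)
    (hlev : ∀ x y, 0 < E x y → ℓ x ≤ ℓ y + 1 ∧ ℓ y ≤ ℓ x + 1)
    (hm : ∀ x, 0 < m x)
    (dp dm : ℕ → ℝ)
    (hdp : ∀ x, (∑' y, if ℓ y = ℓ x + 1 then E x y else 0) / m x = dp (ℓ x))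
    (hdm : ∀ x, (∑' y, if ℓ y + 1 = ℓ x then E x y else 0) / m x = dm (ℓ x)) :
    ∀ (f : V → ℝ) (x : V),
      lap E m (sphAvg ℓ m f) x = sphAvg ℓ m (lap E m f) x := by
  classical
  intro f x
  set n := ℓ x with hn
  set Sn : Finset V := (hlev_fin n).toFinset with hSn
  set S1 : Finset V := (hlev_fin (n + 1)).toFinset with hS1
  have hQfin : {z : V | ℓ z + 1 = n}.Finite :=
    (hlev_fin (n - 1)).subset (fun z hz => by
      simp only [Set.mem_setOf_eq] at hz ⊢; omega)
  set Q : Finset V := hQfin.toFinset with hQ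
  have hSnmem : ∀ y, y ∈ Sn ↔ ℓ y = n := fun y => by simp [hSn]
  have hS1mem : ∀ y, y ∈ S1 ↔ ℓ y = n + 1 := fun y => by simp [hS1]
  have hQmem : ∀ y, y ∈ Q ↔ ℓ y + 1 = n := fun y => by simp [hQ]
  have hmne : ∀ y : V, m y ≠ 0 := fun y => (hm y).ne'
  have hE0 : ∀ a b : V, ¬ 0 < E a b → E a b = 0 :=
    fun a b h => le_antisymm (not_lt.1 h) (hE_nonneg a b)
  -- lap as a finite sum
  have hlapfin : ∀ (g : V → ℝ) (y : V),
      lap E m g y = (∑ z ∈ (hloc y).toFinset, E y z * (g y - g z)) / m y := by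
    intro g y
    unfold lap
    congr 1
    refine (tsum_eq_sum fun z hz => ?_)
    rw [hE0 y z (by simpa using hz), zero_mul]
  -- averages as finite sums
  have havg : ∀ (g : V → ℝ) (y : V),
      sphAvg ℓ m g y =
        (∑ z ∈ (hlev_fin (ℓ y)).toFinset, g z * m z) /
          (∑ z ∈ (hlev_fin (ℓ y)).toFinset, m z) := by
    intro g y
    unfold sphAvg
    rw [tsum_ite_sum (p := fun z => ℓ z = ℓ y) (s := (hlev_fin (ℓ y)).toFinset)
        (fun z => by simp) (fun z => g z * m z),
      tsum_ite_sum (p := fun z => ℓ z = ℓ y) (s := (hlev_fin (ℓ y)).toFinset)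
        (fun z => by simp) m]
  -- degree identities
  have hdpS1 : ∀ y : V, ℓ y = n → ∑ z ∈ S1, E y z = dp n * m y := by
    intro y hy
    have h := hdp y
    rw [tsum_ite_sum (p := fun z => ℓ z = ℓ y + 1) (s := S1)
        (fun z => by simp [hS1mem z, hy]) (fun z => E y z),
      div_eq_iff (hmne y), hy] at h
    exact h
  have hdmQ : ∀ y : V, ℓ y = n → ∑ z ∈ Q, E y z = dm n * m y := by
    intro y hy
    have h := hdm y
    rw [tsum_ite_sum (p := fun z => ℓ z + 1 = ℓ y) (s := Q)
        (fun z => by simp [hQmem z, hy]) (fun z => E y z),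
      div_eq_iff (hmne y), hy] at h
    exact h
  have hdmS1 : ∀ z : V, ℓ z = n + 1 → ∑ y ∈ Sn, E z y = dm (n + 1) * m z := by
    intro z hz
    have h := hdm z
    rw [tsum_ite_sum (p := fun y => ℓ y + 1 = ℓ z) (s := Sn)
        (fun y => by simp only [hSnmem y, hz]; omega) (fun y => E z y),
      div_eq_iff (hmne z), hz] at h
    exact h
  have hdpQ : ∀ z : V, z ∈ Q → ∑ y ∈ Sn, E z y = dp (ℓ z) * m z := by
    intro z hz
    have hz' : ℓ z + 1 = n := (hQmem z).1 hz
    have h := hdp z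
    rw [tsum_ite_sum (p := fun y => ℓ y = ℓ z + 1) (s := Sn)
        (fun y => by simp only [hSnmem y]; omega) (fun y => E z y),
      div_eq_iff (hmne z)] at h
    exact h
  -- splitting of an edge sum over the three neighboring spheres
  have hsplit : ∀ (y : V) (t : V → ℝ), ℓ y = n →
      ∑ z ∈ (hloc y).toFinset, E y z * t z
        = ∑ z ∈ S1, E y z * t z + ∑ z ∈ Q, E y z * t z
          + ∑ z ∈ Sn, E y z * t z := by
    intro y t hy
    set Ny : Finset V := (hloc y).toFinset with hNy
    have hNymem : ∀ z, z ∈ Ny ↔ 0 < E y z := fun z => by simp [hNy]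
    have hzero : ∀ (s : Finset V) (p : V → Prop) [DecidablePred p],
        (∀ z, z ∈ s ↔ p z) →
        ∑ z ∈ Ny.filter p, E y z * t z = ∑ z ∈ s, E y z * t z := by
      intro s p _ hmem
      refine Finset.sum_subset
        (fun z hz => (hmem z).2 (Finset.mem_filter.1 hz).2) (fun z hz hz' => ?_)
      have hzn : z ∉ Ny := fun h => hz' (Finset.mem_filter.2 ⟨h, (hmem z).1 hz⟩)
      rw [hE0 y z (fun h => hzn ((hNymem z).2 h)), zero_mul]
    have h1 := hzero S1 (fun z => ℓ z = n + 1) hS1mem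
    have h2 := hzero Q (fun z => ℓ z + 1 = n) hQmem
    have h3 := hzero Sn (fun z => ℓ z = n) hSnmem
    have d1 := Finset.sum_filter_add_sum_filter_not Ny (fun z => ℓ z = n + 1)
      (fun z => E y z * t z)
    have d2 := Finset.sum_filter_add_sum_filter_not
      (Ny.filter (fun z => ¬ ℓ z = n + 1)) (fun z => ℓ z + 1 = n)
      (fun z => E y z * t z)
    rw [Finset.filter_filter, Finset.filter_filter] at d2
    have d4 : Ny.filter (fun z => ¬ ℓ z = n + 1 ∧ ℓ z + 1 = n)
        = Ny.filter (fun z => ℓ z + 1 = n) := by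
      refine Finset.filter_congr fun z hz => ?_
      constructor
      · exact fun h => h.2
      · intro h; exact ⟨by omega, h⟩
    have d3 : Ny.filter (fun z => ¬ ℓ z = n + 1 ∧ ¬ ℓ z + 1 = n)
        = Ny.filter (fun z => ℓ z = n) := by
      refine Finset.filter_congr fun z hz => ?_
      have hEz : 0 < E y z := (hNymem z).1 hz
      have hb := hlev y z hEz
      constructor
      · intro h; omega
      · intro h; omega
    calc ∑ z ∈ Ny, E y z * t z
        = ∑ z ∈ Ny.filter (fun z => ℓ z = n + 1), E y z * t z
          + ∑ z ∈ Ny.filter (fun z => ¬ ℓ z = n + 1), E y z * t z := d1.symm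
      _ = ∑ z ∈ Ny.filter (fun z => ℓ z = n + 1), E y z * t z
          + (∑ z ∈ Ny.filter (fun z => ¬ ℓ z = n + 1 ∧ ℓ z + 1 = n), E y z * t z
            + ∑ z ∈ Ny.filter (fun z => ¬ ℓ z = n + 1 ∧ ¬ ℓ z + 1 = n), E y z * t z) := by
          rw [d2]
      _ = ∑ z ∈ S1, E y z * t z + (∑ z ∈ Q, E y z * t z + ∑ z ∈ Sn, E y z * t z) := by
          rw [d4, d3, h1, h2, h3]
      _ = _ := by ring
  -- values of the average on the three spheres
  have hAx : sphAvg ℓ m f x = (∑ w ∈ Sn, f w * m w) / ∑ w ∈ Sn, m w := by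
    rw [havg f x, ← hn, ← hSn]
  have hAz1 : ∀ z, ℓ z = n + 1 →
      sphAvg ℓ m f z = (∑ w ∈ S1, f w * m w) / ∑ w ∈ S1, m w := by
    intro z hz; rw [havg f z, hz, ← hS1]
  have hAzQ : ∀ z, z ∈ Q →
      sphAvg ℓ m f z = (∑ w ∈ Q, f w * m w) / ∑ w ∈ Q, m w := by
    intro z hz
    have hz' : ℓ z + 1 = n := (hQmem z).1 hz
    have hfe : (hlev_fin (ℓ z)).toFinset = Q := by
      ext w
      simp only [Set.Finite.mem_toFinset, Set.mem_setOf_eq, hQmem w]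
      omega
    rw [havg f z, hfe]
  have hAzn : ∀ z, ℓ z = n →
      sphAvg ℓ m f z = (∑ w ∈ Sn, f w * m w) / ∑ w ∈ Sn, m w := by
    intro z hz; rw [havg f z, hz, ← hSn]
  -- the left-hand side
  have L : lap E m (sphAvg ℓ m f) x =
      (dp n * m x * ((∑ w ∈ Sn, f w * m w) / (∑ w ∈ Sn, m w)
          - (∑ w ∈ S1, f w * m w) / (∑ w ∈ S1, m w))
        + dm n * m x * ((∑ w ∈ Sn, f w * m w) / (∑ w ∈ Sn, m w)
          - (∑ w ∈ Q, f w * m w) / (∑ w ∈ Q, m w))) / m x := by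
    rw [hlapfin]
    congr 1
    rw [hsplit x (fun z => sphAvg ℓ m f x - sphAvg ℓ m f z) hn.symm]
    have c1 : ∑ z ∈ S1, E x z * (sphAvg ℓ m f x - sphAvg ℓ m f z)
        = dp n * m x * ((∑ w ∈ Sn, f w * m w) / (∑ w ∈ Sn, m w)
            - (∑ w ∈ S1, f w * m w) / (∑ w ∈ S1, m w)) := by
      rw [show ∑ z ∈ S1, E x z * (sphAvg ℓ m f x - sphAvg ℓ m f z)
          = ∑ z ∈ S1, E x z * ((∑ w ∈ Sn, f w * m w) / (∑ w ∈ Sn, m w)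
              - (∑ w ∈ S1, f w * m w) / (∑ w ∈ S1, m w)) from
        Finset.sum_congr rfl fun z hz => by
          rw [hAx, hAz1 z ((hS1mem z).1 hz)]]
      rw [← Finset.sum_mul, hdpS1 x hn.symm]
    have c2 : ∑ z ∈ Q, E x z * (sphAvg ℓ m f x - sphAvg ℓ m f z)
        = dm n * m x * ((∑ w ∈ Sn, f w * m w) / (∑ w ∈ Sn, m w)
            - (∑ w ∈ Q, f w * m w) / (∑ w ∈ Q, m w)) := by
      rw [show ∑ z ∈ Q, E x z * (sphAvg ℓ m f x - sphAvg ℓ m f z)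
          = ∑ z ∈ Q, E x z * ((∑ w ∈ Sn, f w * m w) / (∑ w ∈ Sn, m w)
              - (∑ w ∈ Q, f w * m w) / (∑ w ∈ Q, m w)) from
        Finset.sum_congr rfl fun z hz => by
          rw [hAx, hAzQ z hz]]
      rw [← Finset.sum_mul, hdmQ x hn.symm]
    have c3 : ∑ z ∈ Sn, E x z * (sphAvg ℓ m f x - sphAvg ℓ m f z) = 0 := by
      refine Finset.sum_eq_zero fun z hz => ?_
      rw [hAx, hAzn z ((hSnmem z).1 hz)]
      ring
    rw [c1, c2, c3, add_zero]
  -- the right-hand side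
  have R : sphAvg ℓ m (lap E m f) x =
      ((dp n * (∑ w ∈ Sn, f w * m w) - dm (n + 1) * (∑ w ∈ S1, f w * m w))
        + (dm n * (∑ w ∈ Sn, f w * m w) - dp (n - 1) * (∑ w ∈ Q, f w * m w)))
        / ∑ w ∈ Sn, m w := by
    rw [havg (lap E m f) x, ← hn, ← hSn]
    congr 1
    have step1 : ∑ y ∈ Sn, lap E m f y * m y
        = ∑ y ∈ Sn, ∑ z ∈ (hloc y).toFinset, E y z * (f y - f z) := by
      refine Finset.sum_congr rfl fun y hy => ?_
      rw [hlapfin f y, div_mul_cancel₀ _ (hmne y)]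
    have step2 : ∑ y ∈ Sn, ∑ z ∈ (hloc y).toFinset, E y z * (f y - f z)
        = ∑ y ∈ Sn, (∑ z ∈ S1, E y z * (f y - f z) + ∑ z ∈ Q, E y z * (f y - f z)
            + ∑ z ∈ Sn, E y z * (f y - f z)) := by
      refine Finset.sum_congr rfl fun y hy => ?_
      exact hsplit y (fun z => f y - f z) ((hSnmem y).1 hy)
    have hup : ∑ y ∈ Sn, ∑ z ∈ S1, E y z * (f y - f z)
        = dp n * (∑ w ∈ Sn, f w * m w) - dm (n + 1) * (∑ w ∈ S1, f w * m w) := by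
      have e : ∀ y ∈ Sn, ∑ z ∈ S1, E y z * (f y - f z)
          = dp n * (f y * m y) - ∑ z ∈ S1, E y z * f z := by
        intro y hy
        have : ∑ z ∈ S1, E y z * (f y - f z)
            = (∑ z ∈ S1, E y z) * f y - ∑ z ∈ S1, E y z * f z := by
          rw [Finset.sum_mul]
          rw [← Finset.sum_sub_distrib]
          exact Finset.sum_congr rfl fun z _ => by ring
        rw [this, hdpS1 y ((hSnmem y).1 hy)]
        ring
      rw [Finset.sum_congr rfl e, Finset.sum_sub_distrib, ← Finset.mul_sum,
        Finset.sum_comm]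
      congr 1
      rw [Finset.mul_sum]
      refine Finset.sum_congr rfl fun z hz => ?_
      have : ∑ y ∈ Sn, E y z * f z = (∑ y ∈ Sn, E z y) * f z := by
        rw [Finset.sum_mul]
        exact Finset.sum_congr rfl fun y _ => by rw [hE_symm]
      rw [this, hdmS1 z ((hS1mem z).1 hz)]
      ring
    have hlo : ∑ y ∈ Sn, ∑ z ∈ Q, E y z * (f y - f z)
        = dm n * (∑ w ∈ Sn, f w * m w) - dp (n - 1) * (∑ w ∈ Q, f w * m w) := by
      have e : ∀ y ∈ Sn, ∑ z ∈ Q, E y z * (f y - f z)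
          = dm n * (f y * m y) - ∑ z ∈ Q, E y z * f z := by
        intro y hy
        have : ∑ z ∈ Q, E y z * (f y - f z)
            = (∑ z ∈ Q, E y z) * f y - ∑ z ∈ Q, E y z * f z := by
          rw [Finset.sum_mul, ← Finset.sum_sub_distrib]
          exact Finset.sum_congr rfl fun z _ => by ring
        rw [this, hdmQ y ((hSnmem y).1 hy)]
        ring
      rw [Finset.sum_congr rfl e, Finset.sum_sub_distrib, ← Finset.mul_sum,
        Finset.sum_comm]
      congr 1
      rw [Finset.mul_sum]
      refine Finset.sum_congr rfl fun z hz => ?_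
      have hs : ∑ y ∈ Sn, E y z * f z = (∑ y ∈ Sn, E z y) * f z := by
        rw [Finset.sum_mul]
        exact Finset.sum_congr rfl fun y _ => by rw [hE_symm]
      have hz' : ℓ z = n - 1 := by
        have := (hQmem z).1 hz; omega
      rw [hs, hdpQ z hz, hz']
      ring
    have hdiag : ∑ y ∈ Sn, ∑ z ∈ Sn, E y z * (f y - f z) = 0 := by
      have h1 : ∑ y ∈ Sn, ∑ z ∈ Sn, E y z * (f y - f z)
          = ∑ y ∈ Sn, ∑ z ∈ Sn, E y z * f y - ∑ y ∈ Sn, ∑ z ∈ Sn, E y z * f z := by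
        rw [← Finset.sum_sub_distrib]
        refine Finset.sum_congr rfl fun y _ => ?_
        rw [← Finset.sum_sub_distrib]
        exact Finset.sum_congr rfl fun z _ => by ring
      have h2 : ∑ y ∈ Sn, ∑ z ∈ Sn, E y z * f z
          = ∑ y ∈ Sn, ∑ z ∈ Sn, E y z * f y := by
        rw [Finset.sum_comm]
        refine Finset.sum_congr rfl fun y _ => ?_
        exact Finset.sum_congr rfl fun z _ => by rw [hE_symm]
      rw [h1, h2, sub_self]
    rw [step1, step2, Finset.sum_add_distrib, Finset.sum_add_distrib, hup, hlo, hdiag,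
      add_zero]
  -- the two bridging identities
  have I1 : dp n * (∑ w ∈ Sn, m w) = dm (n + 1) * (∑ w ∈ S1, m w) := by
    calc dp n * ∑ w ∈ Sn, m w = ∑ y ∈ Sn, dp n * m y := by rw [Finset.mul_sum]
      _ = ∑ y ∈ Sn, ∑ z ∈ S1, E y z :=
        Finset.sum_congr rfl fun y hy => (hdpS1 y ((hSnmem y).1 hy)).symm
      _ = ∑ z ∈ S1, ∑ y ∈ Sn, E y z := Finset.sum_comm
      _ = ∑ z ∈ S1, dm (n + 1) * m z := by
        refine Finset.sum_congr rfl fun z hz => ?_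
        rw [show ∑ y ∈ Sn, E y z = ∑ y ∈ Sn, E z y from
          Finset.sum_congr rfl fun y _ => hE_symm y z]
        exact hdmS1 z ((hS1mem z).1 hz)
      _ = dm (n + 1) * ∑ w ∈ S1, m w := by rw [Finset.mul_sum]
  have I2 : dm n * (∑ w ∈ Sn, m w) = dp (n - 1) * (∑ w ∈ Q, m w) := by
    calc dm n * ∑ w ∈ Sn, m w = ∑ y ∈ Sn, dm n * m y := by rw [Finset.mul_sum]
      _ = ∑ y ∈ Sn, ∑ z ∈ Q, E y z :=
        Finset.sum_congr rfl fun y hy => (hdmQ y ((hSnmem y).1 hy)).symm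
      _ = ∑ z ∈ Q, ∑ y ∈ Sn, E y z := Finset.sum_comm
      _ = ∑ z ∈ Q, dp (n - 1) * m z := by
        refine Finset.sum_congr rfl fun z hz => ?_
        rw [show ∑ y ∈ Sn, E y z = ∑ y ∈ Sn, E z y from
          Finset.sum_congr rfl fun y _ => hE_symm y z]
        rw [hdpQ z hz, show ℓ z = n - 1 from by have := (hQmem z).1 hz; omega]
      _ = dp (n - 1) * ∑ w ∈ Q, m w := by rw [Finset.mul_sum]
  -- nondegeneracy / degeneracy facts
  have hMn : (∑ w ∈ Sn, m w) ≠ 0 := by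
    have : 0 < ∑ w ∈ Sn, m w :=
      Finset.sum_pos' (fun y _ => (hm y).le) ⟨x, (hSnmem x).2 hn.symm, hm x⟩
    exact this.ne'
  have hM1z : (∑ w ∈ S1, m w) = 0 → (∑ w ∈ S1, f w * m w) = 0 := by
    intro h
    have : S1 = ∅ := by
      by_contra hne
      obtain ⟨z, hz⟩ := Finset.nonempty_iff_ne_empty.2 hne
      exact absurd h (Finset.sum_pos' (fun y _ => (hm y).le) ⟨z, hz, hm z⟩).ne'
    simp [this]
  have hMlz : (∑ w ∈ Q, m w) = 0 → (∑ w ∈ Q, f w * m w) = 0 := by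
    intro h
    have : Q = ∅ := by
      by_contra hne
      obtain ⟨z, hz⟩ := Finset.nonempty_iff_ne_empty.2 hne
      exact absurd h (Finset.sum_pos' (fun y _ => (hm y).le) ⟨z, hz, hm z⟩).ne'
    simp [this]
  rw [L, R]
  exact alg (dp n) (dm n) (dp (n - 1)) (dm (n + 1)) _ _ _ _ _ _ _
    (hmne x) hMn hM1z hMlz I1 I2
end

section
/- On a weakly spherically symmetric graph, if W is a radial function satisfying ΔW(x) = λ(|x|)W(x) for all x, with λ ≥ 0 and W ≥ 0, then W is non-increasing: W(n+1) ≤ W(n) for all n ≥ 0. -/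
/-- On a weakly spherically symmetric graph, a nonnegative radial solution `W`
of `ΔW = λ(|·|)W` with `λ ≥ 0` is non-increasing. -/
theorem radial_solution_nonincreasing
    (dp dm lam W : ℕ → ℝ)
    (hdp : ∀ n, 0 < dp n) (hdm : ∀ n, 0 ≤ dm n) (hdm0 : dm 0 = 0)
    (hlam : ∀ n, 0 ≤ lam n) (hW : ∀ n, 0 ≤ W n)
    (hbase : dp 0 * (W 1 - W 0) = -(lam 0) * W 0)
    (hrec : ∀ n, 1 ≤ n →
      dp n * (W (n + 1) - W n) = dm n * (W n - W (n - 1)) - lam n * W n) :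
    ∀ n, W (n + 1) ≤ W n := by
  intro n
  induction n with
  | zero =>
      have h : dp 0 * (W 1 - W 0) ≤ 0 := by
        rw [hbase]
        have := mul_nonneg (hlam 0) (hW 0)
        linarith
      nlinarith [hdp 0]
  | succ k ih =>
      have hk : 1 ≤ k + 1 := Nat.le_add_left 1 k
      have h := hrec (k + 1) hk
      simp only [Nat.add_sub_cancel] at h
      have h1 : dm (k + 1) * (W (k + 1) - W k) ≤ 0 :=
        mul_nonpos_of_nonneg_of_nonpos (hdm _) (by linarith)
      have h2 : 0 ≤ lam (k + 1) * W (k + 1) :=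
        mul_nonneg (hlam _) (hW _)
      have h3 : dp (k + 1) * (W (k + 1 + 1) - W (k + 1)) ≤ 0 := by linarith
      nlinarith [hdp (k + 1)]
end

section
/- Let G be a locally finite graph with normalized Laplacian Δ_η, and suppose there is a positive function W on V and λ : V → [0,1) such that the transition operator P f(x) = ∑_y (E(x,y)/η(x)) f(y) satisfies P W(x) ≤ (1 - λ(x)) W(x) for all x (i.e. Δ_η W ≥ λ W). Then for every finite connected W_N ⊆ V and x ∈ W_N, and every n ≥ 0, the expectation E[∏_{k=0}^{(n∧T_N)-1} (1-λ(X_k))^{-1} · W(X_{n∧T_N})] ≤ W(x), where (X_k) is the Markov chain with transitions p(x,y) = E(x,y)/η(x) started at x, and T_N the first exit time from W_N. -/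
/-- Supermartingale estimate for the random walk with transition probabilities
`p(x,y) = E(x,y)/η(x)`.  If `W > 0` satisfies `PW ≤ (1-λ)W` (i.e.
`Δ_η W ≥ λW`) with `0 ≤ λ < 1`, then for every finite connected `W_N ⊆ V`, the
expectations `u n x = E_x[∏_{k=0}^{(n∧T_N)-1} (1-λ(X_k))⁻¹ · W(X_{n∧T_N})]`,
computed by the Markov-property recursion
`u 0 = W`, `u (n+1) x = (1-λ(x))⁻¹ ∑_y p(x,y) u n y` for `x ∈ W_N` and
`u (n+1) x = W x` for `x ∉ W_N`, satisfy `u n x ≤ W x` for all `x ∈ W_N`. -/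
theorem supermartingale_estimate
    {V : Type*} [Countable V]
    (E : V → V → ℝ) (η : V → ℝ) (p : V → V → ℝ)
    (hE_symm : ∀ x y, E x y = E y x)
    (hE_nonneg : ∀ x y, 0 ≤ E x y)
    (hE_diag : ∀ x, E x x = 0)
    (hloc : ∀ x, {y | 0 < E x y}.Finite)
    (hη : ∀ x, η x = ∑' y, E x y)
    (hηpos : ∀ x, 0 < η x)
    (hp : ∀ x y, p x y = E x y / η x)
    (lam : V → ℝ) (hlam0 : ∀ x, 0 ≤ lam x) (hlam1 : ∀ x, lam x < 1)
    (W : V → ℝ) (hWpos : ∀ x, 0 < W x)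
    (hsuper : ∀ x, ∑' y, p x y * W y ≤ (1 - lam x) * W x)
    (WN : Set V) (hWNfin : WN.Finite)
    (hWNconn : ∀ x ∈ WN, ∀ y ∈ WN,
      Relation.ReflTransGen (fun a b => 0 < E a b ∧ a ∈ WN ∧ b ∈ WN) x y)
    (u : ℕ → V → ℝ)
    (hu0 : ∀ x, u 0 x = W x)
    (hu_in : ∀ n x, x ∈ WN → u (n + 1) x = (1 - lam x)⁻¹ * ∑' y, p x y * u n y)
    (hu_out : ∀ n x, x ∉ WN → u (n + 1) x = W x) :
    ∀ n, ∀ x ∈ WN, u n x ≤ W x := by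
  have key : ∀ n x, u n x ≤ W x := by
    intro n
    induction n with
    | zero => intro x; rw [hu0]
    | succ n ih =>
      intro x
      by_cases hx : x ∈ WN
      · rw [hu_in n x hx]
        have hpnn : ∀ y, 0 ≤ p x y := fun y => by
          rw [hp]; exact div_nonneg (hE_nonneg x y) (hηpos x).le
        have hzero : ∀ y ∉ (hloc x).toFinset, p x y = 0 := by
          intro y hy
          rw [Set.Finite.mem_toFinset, Set.mem_setOf_eq, not_lt] at hy
          rw [hp]
          have : E x y = 0 := le_antisymm hy (hE_nonneg x y)
          simp [this]
        have hsum1 : Summable (fun y => p x y * u n y) :=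
          summable_of_ne_finset_zero (s := (hloc x).toFinset)
            (fun y hy => by rw [hzero y hy, zero_mul])
        have hsum2 : Summable (fun y => p x y * W y) :=
          summable_of_ne_finset_zero (s := (hloc x).toFinset)
            (fun y hy => by rw [hzero y hy, zero_mul])
        have h1 : ∑' y, p x y * u n y ≤ ∑' y, p x y * W y :=
          Summable.tsum_le_tsum (fun y => mul_le_mul_of_nonneg_left (ih y) (hpnn y)) hsum1 hsum2
        have hlx : 0 < 1 - lam x := by linarith [hlam1 x]
        calc (1 - lam x)⁻¹ * ∑' y, p x y * u n y
            ≤ (1 - lam x)⁻¹ * ((1 - lam x) * W x) :=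
              mul_le_mul_of_nonneg_left (h1.trans (hsuper x)) (inv_nonneg.2 hlx.le)
          _ = W x := by field_simp
      · rw [hu_out n x hx]
  exact fun n x _ => key n x
end

section
/- Let G be a weighted graph admitting a 1-dimensional decomposition such that lim_{|x|→∞} deg₊(x) = ∞ and max(deg₋(x), deg₀(x)) = o(deg₊(x)) as |x|→∞. Then for every ε > 0 there exists c_ε > 0 such that ⟨f, Δ_m f⟩ ≥ (1-ε)⟨f, deg(·)f⟩ - c_ε‖f‖² for all finitely supported f; consequently the form domains of Δ_m and of multiplication by deg coincide, and σ_ess(Δ_m) = ∅. -/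
/-!
Split the edge weight into forward edges (level goes up by one), backward edges and spherical
edges. On a forward edge `x → y`, `(f x - f y)² ≥ (1 - δ) f(x)² - (δ⁻¹ - 1) f(y)²`; since every
edge occurs in both orientations in the symmetric double sum, this Hardy-type estimate gives
`Q(f) ≥ (1 - δ) ⟨f, deg₊ f⟩ - (δ⁻¹ - 1) ⟨f, deg₋ f⟩`. Far out `deg₋, deg₀ ≤ δ² deg₊ / 2`, so there
`deg ≈ deg₊` and the `deg₋` term is absorbed at the price `O(δ)`; the finitely many remaining
vertices only cost a constant. Together with `Q(f) ≤ 2 ⟨f, deg f⟩`, from `(a - b)² ≤ 2a² + 2b²`,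
this gives the equivalence of the form norms, and `deg₊ → ∞` makes `Q(f) / ‖f‖²` large for `f`
supported far out.
-/

open Finset Function

section FiniteSums

variable {α : Type*}

lemma summable_of_vanishing_of_finite_support {f g : α → ℝ} (hf : (support f).Finite)
    (hfg : ∀ x, f x = 0 → g x = 0) : Summable g :=
  summable_of_hasFiniteSupport (hf.subset fun x hx => mt (hfg x) hx)

lemma tsum_tsum_eq_sum_sum {g : α → α → ℝ} (T : Finset α)
    (hT : ∀ x y, g x y ≠ 0 → x ∈ T ∧ y ∈ T) :
    ∑' x, ∑' y, g x y = ∑ x ∈ T, ∑ y ∈ T, g x y := by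
  rw [tsum_eq_sum fun x hx => ?_]
  · exact sum_congr rfl fun x _ => tsum_eq_sum fun y hy => by_contra fun h => hy (hT x y h).2
  · exact (tsum_congr fun y => by_contra fun h => hx (hT x y h).1).trans tsum_zero

lemma tsum_tsum_mul_eq_sum_sum {w : α → α → ℝ} {u : α → ℝ} (T : Finset α)
    (hT : ∀ x, u x ≠ 0 → x ∈ T ∧ ∀ y, w x y ≠ 0 → y ∈ T) :
    ∑' x, (∑' y, w x y) * u x = ∑ x ∈ T, ∑ y ∈ T, w x y * u x := by
  rw [tsum_eq_sum fun x hx => ?_]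
  · refine sum_congr rfl fun x _ => ?_
    rw [← sum_mul]
    by_cases hu : u x = 0
    · simp [hu]
    · rw [tsum_eq_sum fun y hy => by_contra fun h => hy ((hT x hu).2 y h)]
  · rw [show u x = 0 from by_contra fun h => hx (hT x h).1, mul_zero]

lemma mul_tsum_sub_mul_tsum {f g : α → ℝ} (hf : Summable f) (hg : Summable g) (a b : ℝ) :
    a * ∑' x, f x - b * ∑' x, g x = ∑' x, (a * f x - b * g x) := by
  rw [← tsum_mul_left, ← tsum_mul_left, (hf.mul_left a).tsum_sub (hg.mul_left b)]

end FiniteSums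

lemma le_sq_sub_of_pos {δ : ℝ} (hδ : 0 < δ) (a b : ℝ) :
    (1 - δ) * a ^ 2 - (δ⁻¹ - 1) * b ^ 2 ≤ (a - b) ^ 2 := by
  have key : δ * ((a - b) ^ 2 - ((1 - δ) * a ^ 2 - (δ⁻¹ - 1) * b ^ 2)) = (δ * a - b) ^ 2 := by
    field_simp
    ring
  have := (mul_nonneg_iff_of_pos_left hδ).mp (key ▸ sq_nonneg (δ * a - b))
  linarith

lemma exists_pos_le_add_of_le_off_finite {α : Type*} {g h : α → ℝ} {s : Set α} (hs : s.Finite)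
    (hgh : ∀ x ∉ s, g x ≤ h x) : ∃ c > 0, ∀ x, g x ≤ h x + c := by
  obtain ⟨b, hb⟩ := (hs.image fun x => g x - h x).bddAbove
  refine ⟨max b 0 + 1, by positivity, fun x => ?_⟩
  by_cases hx : x ∈ s
  · linarith [hb (Set.mem_image_of_mem _ hx), le_max_left b 0]
  · linarith [hgh x hx, le_max_right b 0]

section Graph

variable {V : Type*} {E : V → V → ℝ} {f : V → ℝ}

lemma exists_finset_support_nbhd (hloc : ∀ x, {y | E x y ≠ 0}.Finite) (hf : (support f).Finite) :
    ∃ T : Finset V, ∀ x, f x ≠ 0 → x ∈ T ∧ ∀ y, E x y ≠ 0 → y ∈ T := by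
  classical
  refine ⟨hf.toFinset ∪ hf.toFinset.biUnion fun x => (hloc x).toFinset,
    fun x hx => ⟨mem_union_left _ (hf.mem_toFinset.mpr hx), fun y hy => ?_⟩⟩
  exact mem_union_right _
    (mem_biUnion.mpr ⟨x, hf.mem_toFinset.mpr hx, (hloc x).mem_toFinset.mpr hy⟩)

lemma energy_eq_sum_sum (hE : ∀ x y, E x y = E y x) {T : Finset V}
    (hT : ∀ x, f x ≠ 0 → x ∈ T ∧ ∀ y, E x y ≠ 0 → y ∈ T) :
    ∑' x, ∑' y, E x y * (f x - f y) ^ 2 = ∑ x ∈ T, ∑ y ∈ T, E x y * (f x - f y) ^ 2 := by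
  refine tsum_tsum_eq_sum_sum T fun x y hxy => ?_
  obtain ⟨hExy, hfxy⟩ := mul_ne_zero_iff.mp hxy
  by_cases hx : f x = 0
  · have hy : f y ≠ 0 := fun hy => hfxy (by simp [hx, hy])
    exact ⟨(hT y hy).2 x (by rwa [hE] at hExy), (hT y hy).1⟩
  · exact ⟨(hT x hx).1, (hT x hx).2 y hExy⟩

theorem energy_le_four_mul {m deg : V → ℝ} (hE : ∀ x y, E x y = E y x)
    (hE0 : ∀ x y, 0 ≤ E x y) (hloc : ∀ x, {y | E x y ≠ 0}.Finite)
    (hrow : ∀ x, ∑' y, E x y = deg x * m x) (hf : (support f).Finite) :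
    ∑' x, ∑' y, E x y * (f x - f y) ^ 2 ≤ 4 * ∑' x, deg x * f x ^ 2 * m x := by
  obtain ⟨T, hT⟩ := exists_finset_support_nbhd hloc hf
  have hdeg : ∑' x, deg x * f x ^ 2 * m x = ∑' x, (∑' y, E x y) * f x ^ 2 :=
    tsum_congr fun x => by rw [hrow]; ring
  rw [hdeg, energy_eq_sum_sum hE hT, tsum_tsum_mul_eq_sum_sum T
    fun x hx => hT x ((pow_ne_zero_iff two_ne_zero).mp hx)]
  have hswap : ∑ x ∈ T, ∑ y ∈ T, E x y * f y ^ 2 = ∑ x ∈ T, ∑ y ∈ T, E x y * f x ^ 2 := by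
    rw [sum_comm]
    exact sum_congr rfl fun y _ => sum_congr rfl fun x _ => by rw [hE]
  calc ∑ x ∈ T, ∑ y ∈ T, E x y * (f x - f y) ^ 2
      ≤ ∑ x ∈ T, ∑ y ∈ T, (2 * (E x y * f x ^ 2) + 2 * (E x y * f y ^ 2)) := by
        gcongr with x _ y _
        nlinarith [mul_nonneg (hE0 x y) (sq_nonneg (f x + f y))]
    _ = 4 * ∑ x ∈ T, ∑ y ∈ T, E x y * f x ^ 2 := by
        simp only [sum_add_distrib, ← mul_sum, hswap]
        ring

/-- A Hardy inequality for any orientation `w` of a part of the edge weight. -/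
theorem energy_ge_of_orientation (hE : ∀ x y, E x y = E y x)
    (hloc : ∀ x, {y | E x y ≠ 0}.Finite) {w : V → V → ℝ} (hw : ∀ x y, 0 ≤ w x y)
    (hwE : ∀ x y, w x y + w y x ≤ E x y) {δ : ℝ} (hδ : 0 < δ) (hf : (support f).Finite) :
    2 * ((1 - δ) * ∑' x, (∑' y, w x y) * f x ^ 2 - (δ⁻¹ - 1) * ∑' x, (∑' y, w y x) * f x ^ 2) ≤
      ∑' x, ∑' y, E x y * (f x - f y) ^ 2 := by
  obtain ⟨T, hT⟩ := exists_finset_support_nbhd hloc hf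
  have hwE_ne : ∀ x y, w x y ≠ 0 → E x y ≠ 0 ∧ E y x ≠ 0 := fun x y h => by
    have : 0 < E x y := by linarith [(hw x y).lt_of_ne' h, hw y x, hwE x y]
    exact ⟨this.ne', by rw [← hE]; exact this.ne'⟩
  have hout : ∀ x, f x ≠ 0 → x ∈ T ∧ ∀ y, w x y ≠ 0 → y ∈ T :=
    fun x hx => ⟨(hT x hx).1, fun y hy => (hT x hx).2 y (hwE_ne x y hy).1⟩
  have hin : ∀ x, f x ≠ 0 → x ∈ T ∧ ∀ y, w y x ≠ 0 → y ∈ T :=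
    fun x hx => ⟨(hT x hx).1, fun y hy => (hT x hx).2 y (hwE_ne y x hy).2⟩
  rw [tsum_tsum_mul_eq_sum_sum T fun x hx => hout x ((pow_ne_zero_iff two_ne_zero).mp hx),
    tsum_tsum_mul_eq_sum_sum (w := fun x y => w y x) T
      fun x hx => hin x ((pow_ne_zero_iff two_ne_zero).mp hx),
    energy_eq_sum_sum hE hT]
  have hswap : ∑ x ∈ T, ∑ y ∈ T, w y x * (f x - f y) ^ 2 =
      ∑ x ∈ T, ∑ y ∈ T, w x y * (f x - f y) ^ 2 := by
    rw [sum_comm]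
    exact sum_congr rfl fun y _ => sum_congr rfl fun x _ => by ring
  calc 2 * ((1 - δ) * ∑ x ∈ T, ∑ y ∈ T, w x y * f x ^ 2
        - (δ⁻¹ - 1) * ∑ x ∈ T, ∑ y ∈ T, w y x * f x ^ 2)
      = 2 * ∑ x ∈ T, ∑ y ∈ T, w x y * ((1 - δ) * f x ^ 2 - (δ⁻¹ - 1) * f y ^ 2) := by
        rw [sum_comm (f := fun x y => w y x * f x ^ 2)]
        simp only [mul_sum, ← sum_sub_distrib]
        exact sum_congr rfl fun x _ => sum_congr rfl fun y _ => by ring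
    _ ≤ 2 * ∑ x ∈ T, ∑ y ∈ T, w x y * (f x - f y) ^ 2 := by
        gcongr with x _ y _
        · exact hw x y
        · exact le_sq_sub_of_pos hδ _ _
    _ = ∑ x ∈ T, ∑ y ∈ T, (w x y + w y x) * (f x - f y) ^ 2 := by
        simp only [add_mul, sum_add_distrib, hswap]
        ring
    _ ≤ ∑ x ∈ T, ∑ y ∈ T, E x y * (f x - f y) ^ 2 := by
        gcongr with x _ y _
        exact hwE x y

lemma one_sub_two_mul_add_add_le {δ p q r : ℝ} (hδ : 0 < δ) (hδ' : δ ≤ 1 / 2) (hp : 0 ≤ p)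
    (hq : q ≤ δ ^ 2 / 2 * p) (hr : r ≤ δ ^ 2 / 2 * p) :
    (1 - 2 * δ) * (p + q + r) ≤ (1 - δ) * p - (δ⁻¹ - 1) * q := by
  have hinv : 2 ≤ δ⁻¹ := by rw [le_inv_comm₀ (by norm_num) hδ]; linarith
  have h1 : (δ⁻¹ - 1) * q ≤ (δ⁻¹ - 1) * (δ ^ 2 / 2 * p) :=
    mul_le_mul_of_nonneg_left hq (by linarith)
  have h2 : (δ⁻¹ - 1) * (δ ^ 2 / 2 * p) = (δ / 2 - δ ^ 2 / 2) * p := by field_simp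
  have h12δ : 0 ≤ 1 - 2 * δ := by linarith
  nlinarith [mul_le_mul_of_nonneg_left hq h12δ, mul_le_mul_of_nonneg_left hr h12δ,
    mul_nonneg hδ.le hp, mul_nonneg (mul_nonneg hδ.le hδ.le) hp,
    mul_nonneg (mul_nonneg (mul_nonneg hδ.le hδ.le) hδ.le) hp]

lemma form_norms_equiv {q d n c : ℝ} (hq : 0 ≤ q) (hn : 0 ≤ n) (hc : 0 ≤ c) (hqd : q ≤ 2 * d)
    (hdq : (1 - 1 / 2) * d - c * n ≤ q) :
    q + n ≤ (2 * c + 2) * (d + n) ∧ d + n ≤ (2 * c + 2) * (q + n) := by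
  have hd : 0 ≤ d := by linarith
  constructor <;> nlinarith [mul_nonneg hc hq, mul_nonneg hc hn, mul_nonneg hc hd]

section Levels

variable {ℓ : V → ℕ} {m deg degp degm deg0 : V → ℝ}

lemma setOf_level_lt_finite (hlev_fin : ∀ n, {x | ℓ x = n}.Finite) (N : ℕ) :
    {x | ℓ x < N}.Finite :=
  (Set.finite_Iio N).preimage' fun n _ => hlev_fin n

lemma tsum_eq_up_add_down_add_level (hE0 : ∀ x y, 0 ≤ E x y)
    (hloc : ∀ x, {y | E x y ≠ 0}.Finite)
    (hlev : ∀ x y, 0 < E x y → ℓ x ≤ ℓ y + 1 ∧ ℓ y ≤ ℓ x + 1) (x : V) :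
    ∑' y, E x y = (∑' y, if ℓ y = ℓ x + 1 then E x y else 0)
      + (∑' y, if ℓ y + 1 = ℓ x then E x y else 0) + (∑' y, if ℓ y = ℓ x then E x y else 0) := by
  have hsum : ∀ g : V → ℝ, (∀ y, E x y = 0 → g y = 0) → Summable g :=
    fun g => summable_of_vanishing_of_finite_support (hloc x)
  rw [← Summable.tsum_add, ← Summable.tsum_add]
  · refine tsum_congr fun y => ?_
    rcases (hE0 x y).eq_or_lt with h | h
    · simp [← h]
    · have := hlev x y h
      split_ifs <;> first | omega | ring
  all_goals exact hsum _ fun y hy => by simp [hy]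

theorem energy_ge_up_down (hE : ∀ x y, E x y = E y x) (hE0 : ∀ x y, 0 ≤ E x y)
    (hloc : ∀ x, {y | E x y ≠ 0}.Finite)
    (hup : ∀ x, (∑' y, if ℓ y = ℓ x + 1 then E x y else 0) = degp x * m x)
    (hdown : ∀ x, (∑' y, if ℓ y + 1 = ℓ x then E x y else 0) = degm x * m x)
    {δ : ℝ} (hδ : 0 < δ) (hf : (support f).Finite) :
    2 * ((1 - δ) * ∑' x, degp x * f x ^ 2 * m x - (δ⁻¹ - 1) * ∑' x, degm x * f x ^ 2 * m x) ≤
      ∑' x, ∑' y, E x y * (f x - f y) ^ 2 := by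
  have hdown' : ∀ x, (∑' y, if ℓ x = ℓ y + 1 then E y x else 0) = degm x * m x := fun x => by
    rw [← hdown]
    exact tsum_congr fun y => if_congr eq_comm (hE y x) rfl
  have hwE : ∀ x y, ((if ℓ y = ℓ x + 1 then E x y else 0) +
      if ℓ x = ℓ y + 1 then E y x else 0) ≤ E x y := fun x y => by
    split_ifs <;> first | omega | linarith [hE0 x y, hE x y]
  convert energy_ge_of_orientation hE hloc (fun x y => ite_nonneg (hE0 x y) le_rfl) hwE hδ hf
    using 4
  · exact tsum_congr fun x => by rw [hup]; ring
  · exact tsum_congr fun x => by rw [hdown']; ring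

lemma exists_degree_le_up_down_add (hlev_fin : ∀ n, {x | ℓ x = n}.Finite)
    (hsplit : ∀ x, deg x = degp x + degm x + deg0 x) (hdegp : ∀ x, 0 ≤ degp x)
    (hsmall : ∀ ε : ℝ, 0 < ε → ∃ N : ℕ, ∀ x, N ≤ ℓ x → max (degm x) (deg0 x) ≤ ε * degp x)
    {δ : ℝ} (hδ : 0 < δ) (hδ' : δ ≤ 1 / 2) :
    ∃ c > 0, ∀ x, (1 - 2 * δ) * deg x ≤ (1 - δ) * degp x - (δ⁻¹ - 1) * degm x + c := by
  obtain ⟨N, hN⟩ := hsmall (δ ^ 2 / 2) (by positivity)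
  refine exists_pos_le_add_of_le_off_finite (setOf_level_lt_finite hlev_fin N) fun x hx => ?_
  have hx := max_le_iff.mp (hN x (not_lt.mp hx))
  rw [hsplit]
  exact one_sub_two_mul_add_add_le hδ hδ' (hdegp x) hx.1 hx.2

theorem exists_energy_lower_bound (hE : ∀ x y, E x y = E y x) (hE0 : ∀ x y, 0 ≤ E x y)
    (hloc : ∀ x, {y | E x y ≠ 0}.Finite) (hlev_fin : ∀ n, {x | ℓ x = n}.Finite)
    (hm : ∀ x, 0 < m x)
    (hup : ∀ x, (∑' y, if ℓ y = ℓ x + 1 then E x y else 0) = degp x * m x)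
    (hdown : ∀ x, (∑' y, if ℓ y + 1 = ℓ x then E x y else 0) = degm x * m x)
    (hsplit : ∀ x, deg x = degp x + degm x + deg0 x) (hdegp : ∀ x, 0 ≤ degp x)
    (hdeg : ∀ x, 0 ≤ deg x)
    (hsmall : ∀ ε : ℝ, 0 < ε → ∃ N : ℕ, ∀ x, N ≤ ℓ x → max (degm x) (deg0 x) ≤ ε * degp x)
    {ε : ℝ} (hε : 0 < ε) :
    ∃ c : ℝ, 0 < c ∧ ∀ f : V → ℝ, (support f).Finite →
      (1 - ε) * ∑' x, deg x * f x ^ 2 * m x - c * ∑' x, f x ^ 2 * m x ≤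
        1 / 2 * ∑' x, ∑' y, E x y * (f x - f y) ^ 2 := by
  set δ := min ε 1 / 2 with hδ_def
  have hδ : 0 < δ := by positivity
  have h2δ : 2 * δ = min ε 1 := by rw [hδ_def]; ring
  obtain ⟨c, hc, hdeg_le⟩ :=
    exists_degree_le_up_down_add hlev_fin hsplit hdegp hsmall hδ (by linarith [min_le_right ε 1])
  refine ⟨c, hc, fun f hf => ?_⟩
  have hsum : ∀ g : V → ℝ, (∀ x, f x = 0 → g x = 0) → Summable g :=
    fun g => summable_of_vanishing_of_finite_support hf
  have hfm : ∀ x, 0 ≤ f x ^ 2 * m x := fun x => mul_nonneg (sq_nonneg _) (hm x).le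
  calc (1 - ε) * ∑' x, deg x * f x ^ 2 * m x - c * ∑' x, f x ^ 2 * m x
      ≤ (1 - 2 * δ) * ∑' x, deg x * f x ^ 2 * m x - c * ∑' x, f x ^ 2 * m x := by
        gcongr
        · exact tsum_nonneg fun x => mul_nonneg (mul_nonneg (hdeg x) (sq_nonneg _)) (hm x).le
        · linarith [min_le_left ε 1]
    _ = ∑' x, ((1 - 2 * δ) * (deg x * f x ^ 2 * m x) - c * (f x ^ 2 * m x)) :=
        mul_tsum_sub_mul_tsum (hsum _ fun x hx => by simp [hx])
          (hsum _ fun x hx => by simp [hx]) _ _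
    _ ≤ ∑' x, ((1 - δ) * (degp x * f x ^ 2 * m x) - (δ⁻¹ - 1) * (degm x * f x ^ 2 * m x)) :=
        Summable.tsum_le_tsum
          (fun x => by nlinarith [mul_le_mul_of_nonneg_right (hdeg_le x) (hfm x)])
          (hsum _ fun x hx => by simp [hx]) (hsum _ fun x hx => by simp [hx])
    _ = (1 - δ) * ∑' x, degp x * f x ^ 2 * m x - (δ⁻¹ - 1) * ∑' x, degm x * f x ^ 2 * m x :=
        (mul_tsum_sub_mul_tsum (hsum _ fun x hx => by simp [hx])
          (hsum _ fun x hx => by simp [hx]) _ _).symm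
    _ ≤ 1 / 2 * ∑' x, ∑' y, E x y * (f x - f y) ^ 2 := by
        linarith [energy_ge_up_down hE hE0 hloc hup hdown hδ hf]

theorem exists_finset_le_energy (hlev_fin : ∀ n, {x | ℓ x = n}.Finite) (hm : ∀ x, 0 < m x)
    (hdegp_le : ∀ x, degp x ≤ deg x) (hlim : ∀ M : ℝ, ∃ N : ℕ, ∀ x, N ≤ ℓ x → M ≤ degp x)
    {c : ℝ} (hc : ∀ f : V → ℝ, (support f).Finite →
      (1 - 1 / 2) * ∑' x, deg x * f x ^ 2 * m x - c * ∑' x, f x ^ 2 * m x ≤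
        1 / 2 * ∑' x, ∑' y, E x y * (f x - f y) ^ 2)
    (M : ℝ) :
    ∃ K : Finset V, ∀ f : V → ℝ, (support f).Finite → (∀ x ∈ K, f x = 0) →
      M * ∑' x, f x ^ 2 * m x ≤ 1 / 2 * ∑' x, ∑' y, E x y * (f x - f y) ^ 2 := by
  obtain ⟨N, hN⟩ := hlim (2 * (M + c))
  refine ⟨(setOf_level_lt_finite hlev_fin N).toFinset, fun f hf hK => ?_⟩
  have hfar : ∀ x, f x ≠ 0 → 2 * (M + c) ≤ deg x := fun x hx =>
    (hN x (not_lt.mp fun h => hx (hK x (by simpa using h)))).trans (hdegp_le x)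
  have hsum : ∀ g : V → ℝ, (∀ x, f x = 0 → g x = 0) → Summable g :=
    fun g => summable_of_vanishing_of_finite_support hf
  have hfm : ∀ x, 0 ≤ f x ^ 2 * m x := fun x => mul_nonneg (sq_nonneg _) (hm x).le
  have hD : 2 * (M + c) * ∑' x, f x ^ 2 * m x ≤ ∑' x, deg x * f x ^ 2 * m x := by
    rw [← tsum_mul_left]
    refine Summable.tsum_le_tsum (fun x => ?_) (hsum _ fun x hx => by simp [hx])
      (hsum _ fun x hx => by simp [hx])
    by_cases hx : f x = 0
    · simp [hx]
    · linarith [mul_le_mul_of_nonneg_right (hfar x hx) (hfm x)]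
  have hN0 : 0 ≤ ∑' x, f x ^ 2 * m x := tsum_nonneg hfm
  linarith [hc f hf]

end Levels

end Graph

/-- Part (2) expresses equality of the form domains as equivalence of the form norms on finitely
supported functions, part (3) emptiness of the essential spectrum through Persson's
characterization. -/
theorem sparse_weyl_preparation_general
    {V : Type*}
    (E : V → V → ℝ) (m : V → ℝ) (ℓ : V → ℕ)
    (hE_symm : ∀ x y, E x y = E y x)
    (hE_nonneg : ∀ x y, 0 ≤ E x y)
    (hloc : ∀ x, {y | 0 < E x y}.Finite)
    (hlev_fin : ∀ n, {x | ℓ x = n}.Finite)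
    (hlev : ∀ x y, 0 < E x y → ℓ x ≤ ℓ y + 1 ∧ ℓ y ≤ ℓ x + 1)
    (hm : ∀ x, 0 < m x)
    (degp degm deg0 deg : V → ℝ)
    (hdegp : ∀ x, degp x = (∑' y, if ℓ y = ℓ x + 1 then E x y else 0) / m x)
    (hdegm : ∀ x, degm x = (∑' y, if ℓ y + 1 = ℓ x then E x y else 0) / m x)
    (hdeg0 : ∀ x, deg0 x = (∑' y, if ℓ y = ℓ x then E x y else 0) / m x)
    (hdeg : ∀ x, deg x = (∑' y, E x y) / m x)
    (hlim : ∀ M : ℝ, ∃ N : ℕ, ∀ x, N ≤ ℓ x → M ≤ degp x)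
    (hsmall : ∀ ε : ℝ, 0 < ε → ∃ N : ℕ, ∀ x, N ≤ ℓ x →
      max (degm x) (deg0 x) ≤ ε * degp x) :
    (∀ ε : ℝ, 0 < ε → ∃ c : ℝ, 0 < c ∧ ∀ f : V → ℝ,
      (Function.support f).Finite →
        (1 - ε) * (∑' x, deg x * (f x) ^ 2 * m x)
            - c * (∑' x, (f x) ^ 2 * m x) ≤
          (1 / 2) * ∑' x, ∑' y, E x y * (f x - f y) ^ 2) ∧
    (∃ C : ℝ, 0 < C ∧ ∀ f : V → ℝ, (Function.support f).Finite →
      ((1 / 2) * (∑' x, ∑' y, E x y * (f x - f y) ^ 2)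
          + (∑' x, (f x) ^ 2 * m x)
        ≤ C * ((∑' x, deg x * (f x) ^ 2 * m x) + ∑' x, (f x) ^ 2 * m x)) ∧
      ((∑' x, deg x * (f x) ^ 2 * m x) + (∑' x, (f x) ^ 2 * m x)
        ≤ C * ((1 / 2) * (∑' x, ∑' y, E x y * (f x - f y) ^ 2)
            + ∑' x, (f x) ^ 2 * m x))) ∧
    (∀ M : ℝ, ∃ K : Finset V, ∀ f : V → ℝ, (Function.support f).Finite →
      (∀ x ∈ K, f x = 0) →
        M * (∑' x, (f x) ^ 2 * m x) ≤
          (1 / 2) * ∑' x, ∑' y, E x y * (f x - f y) ^ 2) := by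
  have hloc' : ∀ x, {y | E x y ≠ 0}.Finite :=
    fun x => (hloc x).subset fun y hy => (hE_nonneg x y).lt_of_ne' hy
  have hrow : ∀ x, ∑' y, E x y = deg x * m x := fun x => by
    rw [hdeg, div_mul_cancel₀ _ (hm x).ne']
  have hup : ∀ x, (∑' y, if ℓ y = ℓ x + 1 then E x y else 0) = degp x * m x := fun x => by
    rw [hdegp, div_mul_cancel₀ _ (hm x).ne']
  have hdown : ∀ x, (∑' y, if ℓ y + 1 = ℓ x then E x y else 0) = degm x * m x := fun x => by
    rw [hdegm, div_mul_cancel₀ _ (hm x).ne']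
  have hsplit : ∀ x, deg x = degp x + degm x + deg0 x := fun x => by
    rw [hdeg, tsum_eq_up_add_down_add_level hE_nonneg hloc' hlev, add_div, add_div, ← hdegp,
      ← hdegm, ← hdeg0]
  have hnonneg : ∀ x, 0 ≤ degp x ∧ 0 ≤ degm x ∧ 0 ≤ deg0 x := fun x => by
    rw [hdegp, hdegm, hdeg0]
    refine ⟨?_, ?_, ?_⟩ <;>
      exact div_nonneg (tsum_nonneg fun y => ite_nonneg (hE_nonneg x y) le_rfl) (hm x).le
  have hdegp_le : ∀ x, degp x ≤ deg x := fun x => by linarith [hsplit x, hnonneg x]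
  have hlower := fun ε (hε : 0 < ε) => exists_energy_lower_bound hE_symm hE_nonneg hloc'
    hlev_fin hm hup hdown hsplit (fun x => (hnonneg x).1)
    (fun x => (hnonneg x).1.trans (hdegp_le x)) hsmall hε
  obtain ⟨c, hc, hhalf⟩ := hlower (1 / 2) one_half_pos
  refine ⟨hlower, ⟨2 * c + 2, by positivity, fun f hf => form_norms_equiv ?_ ?_ hc.le ?_
    (hhalf f hf)⟩, exists_finset_le_energy hlev_fin hm hdegp_le hlim hhalf⟩
  · exact mul_nonneg (by norm_num) (tsum_nonneg fun x => tsum_nonneg fun y =>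
      mul_nonneg (hE_nonneg x y) (sq_nonneg _))
  · exact tsum_nonneg fun x => mul_nonneg (sq_nonneg _) (hm x).le
  · linarith [energy_le_four_mul hE_symm hE_nonneg hloc' hrow hf]

/-- Theorem on graphs with `deg₊ → ∞` and `max(deg₋, deg₀) = o(deg₊)`:
(1) for every `ε > 0` there is `c_ε > 0` with
`⟨f, Δ_m f⟩ ≥ (1-ε)⟨f, deg f⟩ - c_ε‖f‖²` for all finitely supported `f`;
(2) the form norms of `Δ_m` and of multiplication by `deg` are equivalent on
the core of finitely supported functions (equality of form domains);
(3) the essential spectrum of `Δ_m` is empty, expressed via Persson's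
characterization: for every `M` there is a finite set `K` outside of which the
form is bounded below by `M‖f‖²`. -/
theorem sparse_weyl_preparation
    {V : Type*} [Countable V]
    (E : V → V → ℝ) (m : V → ℝ) (ℓ : V → ℕ)
    (hE_symm : ∀ x y, E x y = E y x)
    (hE_nonneg : ∀ x y, 0 ≤ E x y)
    (hE_diag : ∀ x, E x x = 0)
    (hloc : ∀ x, {y | 0 < E x y}.Finite)
    (hlev_fin : ∀ n, {x | ℓ x = n}.Finite)
    (hlev : ∀ x y, 0 < E x y → ℓ x ≤ ℓ y + 1 ∧ ℓ y ≤ ℓ x + 1)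
    (hm : ∀ x, 0 < m x)
    (degp degm deg0 deg : V → ℝ)
    (hdegp : ∀ x, degp x = (∑' y, if ℓ y = ℓ x + 1 then E x y else 0) / m x)
    (hdegm : ∀ x, degm x = (∑' y, if ℓ y + 1 = ℓ x then E x y else 0) / m x)
    (hdeg0 : ∀ x, deg0 x = (∑' y, if ℓ y = ℓ x then E x y else 0) / m x)
    (hdeg : ∀ x, deg x = (∑' y, E x y) / m x)
    (hlim : ∀ M : ℝ, ∃ N : ℕ, ∀ x, N ≤ ℓ x → M ≤ degp x)
    (hsmall : ∀ ε : ℝ, 0 < ε → ∃ N : ℕ, ∀ x, N ≤ ℓ x →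
      max (degm x) (deg0 x) ≤ ε * degp x) :
    (∀ ε : ℝ, 0 < ε → ∃ c : ℝ, 0 < c ∧ ∀ f : V → ℝ,
      (Function.support f).Finite →
        (1 - ε) * (∑' x, deg x * (f x) ^ 2 * m x)
            - c * (∑' x, (f x) ^ 2 * m x) ≤
          (1 / 2) * ∑' x, ∑' y, E x y * (f x - f y) ^ 2) ∧
    (∃ C : ℝ, 0 < C ∧ ∀ f : V → ℝ, (Function.support f).Finite →
      ((1 / 2) * (∑' x, ∑' y, E x y * (f x - f y) ^ 2)
          + (∑' x, (f x) ^ 2 * m x)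
        ≤ C * ((∑' x, deg x * (f x) ^ 2 * m x) + ∑' x, (f x) ^ 2 * m x)) ∧
      ((∑' x, deg x * (f x) ^ 2 * m x) + (∑' x, (f x) ^ 2 * m x)
        ≤ C * ((1 / 2) * (∑' x, ∑' y, E x y * (f x - f y) ^ 2)
            + ∑' x, (f x) ^ 2 * m x))) ∧
    (∀ M : ℝ, ∃ K : Finset V, ∀ f : V → ℝ, (Function.support f).Finite →
      (∀ x ∈ K, f x = 0) →
        M * (∑' x, (f x) ^ 2 * m x) ≤
          (1 / 2) * ∑' x, ∑' y, E x y * (f x - f y) ^ 2) :=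
  sparse_weyl_preparation_general E m ℓ hE_symm hE_nonneg hloc hlev_fin hlev hm degp degm deg0 deg
    hdegp hdegm hdeg0 hdeg hlim hsmall
end
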